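/- arXiv:1803.10180 — 7 statements merged into one kernel-verified Lean document; each statement's English description precedes it below -/
import Mathlib

section
/- Let q be a prime power, t ≥ 1, and let 𝒫 be a vector space t-partition of 𝔽_q^v of type v^{m_v} ⋯ t^{m_t}. Then for all t ≤ i < j ≤ v: m_i ≤ 1 whenever 2i > v + t − 1, and m_i · m_j = 0 whenever i + j > v + t − 1 (dimension condition). -/
open Module

/-- A vector space `t`-partition of `F^v`: a set of subspaces, each of dimension at
least `t`, such that every `t`-dimensional subspace is contained in exactly one element. -/
def IsVSPartition {F : Type} [Field F] {v : ℕ} (t : ℕ)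
    (P : Set (Submodule F (Fin v → F))) : Prop :=
  (∀ U ∈ P, t ≤ finrank F U) ∧
  ∀ T : Submodule F (Fin v → F), finrank F T = t → ∃! U, U ∈ P ∧ T ≤ U

/-!
Two distinct blocks `U ≠ W` of a `t`-partition meet in dimension less than `t`: otherwise a
`t`-subspace of `U ⊓ W` would lie in two blocks. As `U ⊔ W` lives in `F^v`, Grassmann's formula
gives `dim U + dim W = dim (U ⊔ W) + dim (U ⊓ W) < v + t`, so blocks of total dimension at least
`v + t` must coincide.
-/

theorem Submodule.exists_le_finrank_eq {K V : Type*} [DivisionRing K] [AddCommGroup V]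
    [Module K V] (U : Submodule K V) {t : ℕ} (h : t ≤ finrank K U) :
    ∃ T ≤ U, finrank K T = t := by
  obtain ⟨f, hf⟩ := exists_linearIndependent_of_le_finrank h
  refine ⟨span K (Set.range (U.subtype ∘ f)), ?_, ?_⟩
  · rw [span_le]
    rintro _ ⟨k, rfl⟩
    exact (f k).2
  · rw [finrank_span_eq_card (hf.map' U.subtype U.ker_subtype), Fintype.card_fin]

namespace IsVSPartition

variable {F : Type} [Field F] {v t : ℕ} {P : Set (Submodule F (Fin v → F))}

theorem finrank_inf_lt (hP : IsVSPartition t P) {U W : Submodule F (Fin v → F)}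
    (hU : U ∈ P) (hW : W ∈ P) (hne : U ≠ W) : finrank F ↥(U ⊓ W) < t := by
  by_contra! h
  obtain ⟨T, hTle, hT⟩ := (U ⊓ W).exists_le_finrank_eq h
  obtain ⟨_, -, huniq⟩ := hP.2 T hT
  exact hne ((huniq U ⟨hU, hTle.trans inf_le_left⟩).trans
    (huniq W ⟨hW, hTle.trans inf_le_right⟩).symm)

theorem eq_of_add_finrank_le (hP : IsVSPartition t P) {U W : Submodule F (Fin v → F)}
    (hU : U ∈ P) (hW : W ∈ P) (h : v + t ≤ finrank F U + finrank F W) : U = W := by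
  by_contra hne
  have hinf := hP.finrank_inf_lt hU hW hne
  have hsup : finrank F ↥(U ⊔ W) ≤ v := by
    simpa only [finrank_fin_fun] using (U ⊔ W).finrank_le
  have hgrassmann := Submodule.finrank_sup_add_finrank_inf_eq U W
  omega

end IsVSPartition

theorem dimension_condition_general (v t : ℕ)
    (F : Type) [Field F]
    (P : Set (Submodule F (Fin v → F))) (hP : IsVSPartition t P) :
    ∀ i j : ℕ, t ≤ i → i < j → j ≤ v →
      (2 * i > v + t - 1 → {U ∈ P | finrank F U = i}.ncard ≤ 1) ∧
      (i + j > v + t - 1 →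
        {U ∈ P | finrank F U = i}.ncard * {U ∈ P | finrank F U = j}.ncard = 0) := by
  intro i j _ hij _
  refine ⟨fun hi ↦ ?_, fun hsum ↦ ?_⟩
  · have hsub : {U ∈ P | finrank F U = i}.Subsingleton := by
      rintro U ⟨hU, rfl⟩ W ⟨hW, hWi⟩
      exact hP.eq_of_add_finrank_le hU hW (by omega)
    exact (Set.ncard_le_one hsub.finite).2 fun _ hU _ hW ↦ hsub hU hW
  · obtain h | ⟨U, hU, rfl⟩ := {U ∈ P | finrank F U = i}.eq_empty_or_nonempty
    · simp [h]
    suffices {W ∈ P | finrank F W = j} = ∅ by simp [this]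
    refine Set.eq_empty_of_forall_notMem fun W ⟨hW, hWj⟩ ↦ ?_
    obtain rfl := hP.eq_of_add_finrank_le hU hW (by omega)
    omega

/-- Dimension condition: for all `t ≤ i < j ≤ v` we have `m_i ≤ 1` whenever
`2i > v + t − 1` and `m_i · m_j = 0` whenever `i + j > v + t − 1`. -/
theorem dimension_condition (q v t : ℕ) (ht : 1 ≤ t)
    (F : Type) [Field F] [Fintype F] (hq : Fintype.card F = q)
    (P : Set (Submodule F (Fin v → F))) (hP : IsVSPartition t P) :
    ∀ i j : ℕ, t ≤ i → i < j → j ≤ v →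
      (2 * i > v + t - 1 → {U ∈ P | finrank F U = i}.ncard ≤ 1) ∧
      (i + j > v + t - 1 →
        {U ∈ P | finrank F U = i}.ncard * {U ∈ P | finrank F U = j}.ncard = 0) :=
  dimension_condition_general v t F P hP
end

section
/- Let q be a prime power and t ≥ 1. Every non-trivial vector space t-partition 𝒫 of 𝔽_q^{t+2} has type (t+1)^1 t^{[t+2 choose t]_q − [t+1 choose t]_q}; more precisely, 𝒫 consists of exactly one (t+1)-dimensional subspace U together with all t-dimensional subspaces of 𝔽_q^{t+2} not contained in U. -/
open Module

/-- The Gaussian binomial coefficient `[n choose k]_q`, defined via the standard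
Pascal-type recurrence `[n+1, k+1]_q = q^(k+1) * [n, k+1]_q + [n, k]_q`. -/
def gaussBinom (q : ℕ) : ℕ → ℕ → ℕ
  | _, 0 => 1
  | 0, _ + 1 => 0
  | n + 1, k + 1 => q ^ (k + 1) * gaussBinom q n (k + 1) + gaussBinom q n k

/-!
Two distinct members of a `t`-partition meet in dimension `< t`, since a common `t`-subspace
would lie in both. In dimension `t + 2` a member `U` of dimension `t + 1` meets any other member
`W` in dimension at least `dim W - 1`, so `W` is a `t`-space not contained in `U`; conversely a
`t`-space not contained in `U` lies in a member other than `U`, hence is one. This leaves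
`[t+2, t]_q - [t+1, t]_q` members of dimension `t`.

That `F_q^n` has `[n, k]_q` subspaces of dimension `k` follows from the defining recurrence:
fix a line `L`; the `(k+1)`-spaces through `L` correspond to the `k`-spaces of `V ⧸ L`, and
`W ↦ L ⊔ W` maps those not through `L` onto the `(k+2)`-spaces through `L`, each fibre being the
set of `q ^ (k+1)` complements of `L` in a `(k+2)`-space.
-/

theorem gaussBinom_zero_right (q n : ℕ) : gaussBinom q n 0 = 1 := by
  cases n <;> rfl

theorem Nat.card_subtype_eq_card_and_add_card_and_not {α : Type*} [Finite α] (P Q : α → Prop) :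
    Nat.card {a // P a} = Nat.card {a // P a ∧ Q a} + Nat.card {a // P a ∧ ¬Q a} :=
  (Set.ncard_inter_add_ncard_sdiff_eq_ncard {a | P a} {a | Q a}).symm

theorem Nat.card_eq_card_mul_of_card_fiber {α β : Type*} [Finite α] [Finite β] (f : α → β)
    {m : ℕ} (hf : ∀ b, Nat.card {a // f a = b} = m) : Nat.card α = Nat.card β * m := by
  have := Fintype.ofFinite β
  rw [← Nat.card_congr (Equiv.sigmaFiberEquiv f), Nat.card_sigma,
    Finset.sum_congr rfl fun b _ => hf b, Finset.sum_const, Finset.card_univ, smul_eq_mul,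
    Nat.card_eq_fintype_card]

namespace Submodule

variable {F V : Type*} [Field F] [AddCommGroup V] [Module F V]

theorem exists_le_finrank_eq_s4 (W : Submodule F V) {k : ℕ} (hk : k ≤ finrank F W) :
    ∃ T ≤ W, finrank F T = k := by
  obtain ⟨v, hv⟩ := exists_linearIndependent_of_le_finrank hk
  refine ⟨span F (Set.range (W.subtype ∘ v)), span_le.mpr ?_, ?_⟩
  · rintro _ ⟨i, rfl⟩
    exact (v i).2
  · rw [finrank_span_eq_card (hv.map' W.subtype W.ker_subtype), Fintype.card_fin]

theorem card_le_finrank_eq_eq_card_submodule (U : Submodule F V) (k : ℕ) :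
    Nat.card {W : Submodule F V // W ≤ U ∧ finrank F W = k} =
      Nat.card {W : Submodule F U // finrank F W = k} :=
  Nat.card_congr
    { toFun W := ⟨W.1.comap U.subtype, by
        rw [← finrank_map_subtype_eq, map_comap_subtype, inf_eq_right.mpr W.2.1, W.2.2]⟩
      invFun W := ⟨W.1.map U.subtype, map_subtype_le U _, by rw [finrank_map_subtype_eq, W.2]⟩
      left_inv W := Subtype.ext <| by simp only [map_comap_subtype, inf_eq_right.mpr W.2.1]
      right_inv W := Subtype.ext (comap_map_eq_of_injective U.injective_subtype _) }

theorem isCompl_comap_subtype_iff {p X : Submodule F V} (h : p ≤ X) (q : Submodule F X) :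
    IsCompl (p.comap X.subtype) q ↔ Disjoint p (q.map X.subtype) ∧ p ⊔ q.map X.subtype = X := by
  have hp : (p.comap X.subtype).map X.subtype = p := by
    rw [map_comap_subtype, inf_eq_right.mpr h]
  have inj := map_injective_of_injective X.injective_subtype
  rw [isCompl_iff, disjoint_iff, codisjoint_iff, ← inj.eq_iff, ← inj.eq_iff (a := _ ⊔ _),
    map_inf _ X.injective_subtype, map_sup, hp, map_bot, map_subtype_top, disjoint_iff]

theorem sep_insert_finrank_eq_succ {U : Submodule F V} {t : ℕ} (hU : finrank F U = t + 1) :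
    {W ∈ insert U {T : Submodule F V | finrank F T = t ∧ ¬T ≤ U} | finrank F W = t + 1} = {U} := by
  ext W
  simp only [Set.mem_ofPred_eq, Set.mem_insert_iff, Set.mem_singleton_iff]
  grind

theorem sep_insert_finrank_eq {U : Submodule F V} {t : ℕ} (hU : finrank F U ≠ t) :
    {W ∈ insert U {T : Submodule F V | finrank F T = t ∧ ¬T ≤ U} | finrank F W = t} =
      {T : Submodule F V | finrank F T = t} \ {T | T ≤ U ∧ finrank F T = t} := by
  ext W
  simp only [Set.mem_ofPred_eq, Set.mem_insert_iff, Set.mem_sdiff]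
  grind

variable [FiniteDimensional F V]

instance [Finite F] : Finite (Submodule F V) :=
  have : Finite V := Module.finite_of_finite F
  Finite.of_injective _ SetLike.coe_injective

theorem finrank_sup_of_disjoint {p q : Submodule F V} (h : Disjoint p q) :
    finrank F ↥(p ⊔ q) = finrank F p + finrank F q := by
  rw [← finrank_sup_add_finrank_inf_eq, h.eq_bot, finrank_bot, add_zero]

theorem finrank_map_mkQ_add_finrank {p W : Submodule F V} (h : p ≤ W) :
    finrank F (W.map p.mkQ) + finrank F p = finrank F W := by
  have := LinearMap.finrank_range_add_finrank_ker (p.mkQ.domRestrict W)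
  rwa [LinearMap.range_domRestrict, LinearMap.ker_domRestrict, ker_mkQ,
    ← finrank_map_subtype_eq, map_comap_subtype, inf_eq_right.mpr h] at this

theorem card_ge_finrank_eq_add_eq_card_quotient (p : Submodule F V) (k : ℕ) :
    Nat.card {W : Submodule F V // p ≤ W ∧ finrank F W = k + finrank F p} =
      Nat.card {W : Submodule F (V ⧸ p) // finrank F W = k} :=
  Nat.card_congr
    { toFun W := ⟨W.1.map p.mkQ, by
        have := finrank_map_mkQ_add_finrank W.2.1
        omega⟩
      invFun W := ⟨W.1.comap p.mkQ, le_comap_mkQ p _, by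
        rw [← finrank_map_mkQ_add_finrank (le_comap_mkQ p _),
          map_comap_eq_self (by rw [range_mkQ]; exact le_top), W.2]⟩
      left_inv W := Subtype.ext <| by simp only [comap_map_mkQ, sup_eq_right.mpr W.2.1]
      right_inv W := Subtype.ext (map_comap_eq_self (by rw [range_mkQ]; exact le_top)) }

/-- Complements of `p` correspond to projections onto `p`, an affine space over
`q₀ →ₗ[F] p` for any fixed complement `q₀`. -/
theorem card_isCompl [Finite F] (p : Submodule F V) :
    Nat.card {q // IsCompl p q} = Nat.card F ^ (finrank F (V ⧸ p) * finrank F p) := by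
  obtain ⟨q₀, h₀⟩ := p.exists_isCompl
  let e : {f : V →ₗ[F] p // ∀ x : p, f x = x} ≃ (q₀ →ₗ[F] p) :=
    { toFun f := f.1 ∘ₗ q₀.subtype
      invFun g := ⟨LinearMap.ofIsCompl h₀ LinearMap.id g, LinearMap.ofIsCompl_apply_left h₀⟩
      left_inv f := Subtype.ext (LinearMap.ofIsCompl_eq h₀ (fun x => (f.2 x).symm) fun _ => rfl)
      right_inv g := LinearMap.ext (LinearMap.ofIsCompl_apply_right h₀) }
  rw [Nat.card_congr (p.isComplEquivProj.trans e), natCard_eq_pow_finrank (K := F),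
    finrank_linearMap, (p.quotientEquivOfIsCompl q₀ h₀).finrank_eq]

theorem card_disjoint_sup_eq [Finite F] {p X : Submodule F V} (h : p ≤ X) :
    Nat.card {W : Submodule F V // Disjoint p W ∧ p ⊔ W = X} =
      Nat.card F ^ ((finrank F X - finrank F p) * finrank F p) := by
  have hfin : finrank F (p.comap X.subtype) = finrank F p := by
    rw [← finrank_map_subtype_eq, map_comap_subtype, inf_eq_right.mpr h]
  have e : {W : Submodule F V // Disjoint p W ∧ p ⊔ W = X} ≃
      {q : Submodule F X // IsCompl (p.comap X.subtype) q} :=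
    { toFun W := ⟨W.1.comap X.subtype, by
        rw [isCompl_comap_subtype_iff h, map_comap_subtype,
          inf_eq_right.mpr (le_sup_right.trans W.2.2.le)]
        exact W.2⟩
      invFun q := ⟨q.1.map X.subtype, (isCompl_comap_subtype_iff h q.1).mp q.2⟩
      left_inv W := Subtype.ext <| by
        simp only [map_comap_subtype, inf_eq_right.mpr (le_sup_right.trans W.2.2.le)]
      right_inv q := Subtype.ext (comap_map_eq_of_injective X.injective_subtype _) }
  rw [Nat.card_congr e, card_isCompl, finrank_quotient, hfin]

theorem card_finrank_eq_zero : Nat.card {W : Submodule F V // finrank F W = 0} = 1 := by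
  rw [Nat.card_congr (Equiv.subtypeEquivRight fun _ => finrank_eq_zero), Nat.card_unique]

theorem card_finrank_eq_succ_and_span_le {e : V} (he : e ≠ 0) (k : ℕ) :
    Nat.card {W : Submodule F V // finrank F W = k + 1 ∧ (F ∙ e) ≤ W} =
      Nat.card {W : Submodule F (V ⧸ F ∙ e) // finrank F W = k} := by
  rw [← card_ge_finrank_eq_add_eq_card_quotient, finrank_span_singleton he]
  simp only [and_comm]

theorem card_finrank_eq_succ_and_not_span_le [Finite F] {e : V} (he : e ≠ 0) (k : ℕ) :
    Nat.card {W : Submodule F V // finrank F W = k + 1 ∧ ¬(F ∙ e) ≤ W} =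
      Nat.card {W : Submodule F (V ⧸ F ∙ e) // finrank F W = k + 1} * Nat.card F ^ (k + 1) := by
  have hL : finrank F (F ∙ e) = 1 := finrank_span_singleton he
  have hdisj (W : Submodule F V) : Disjoint (F ∙ e) W ↔ ¬(F ∙ e) ≤ W := by
    rw [disjoint_comm, disjoint_span_singleton' he, span_singleton_le_iff_mem]
  rw [← card_ge_finrank_eq_add_eq_card_quotient, hL]
  refine Nat.card_eq_card_mul_of_card_fiber (fun W => ⟨(F ∙ e) ⊔ W.1, le_sup_left, by
    rw [finrank_sup_of_disjoint ((hdisj _).mpr W.2.2), hL, W.2.1, add_comm]⟩) fun X => ?_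
  have hfiber := card_disjoint_sup_eq X.2.1
  rw [X.2.2, hL, Nat.add_sub_cancel, mul_one] at hfiber
  rw [← hfiber]
  exact Nat.card_congr
    { toFun W := ⟨W.1.1, (hdisj _).mpr W.1.2.2, congrArg Subtype.val W.2⟩
      invFun W := ⟨⟨W.1, by
          have := finrank_sup_of_disjoint W.2.1
          rw [W.2.2, X.2.2, hL] at this
          omega, (hdisj _).mp W.2.1⟩, Subtype.ext W.2.2⟩
      left_inv _ := rfl
      right_inv _ := rfl }

theorem card_finrank_eq [Finite F] (k : ℕ) :
    Nat.card {W : Submodule F V // finrank F W = k} = gaussBinom (Nat.card F) (finrank F V) k := by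
  induction hn : finrank F V generalizing V k with
  | zero =>
    cases k with
    | zero => exact card_finrank_eq_zero
    | succ k =>
      have : IsEmpty {W : Submodule F V // finrank F W = k + 1} :=
        ⟨fun W => by linarith [W.2, W.1.finrank_le]⟩
      exact Nat.card_of_isEmpty
  | succ n ih =>
    cases k with
    | zero => rw [gaussBinom_zero_right]; exact card_finrank_eq_zero
    | succ k =>
      have : Nontrivial V := Module.nontrivial_of_finrank_pos (by rw [hn]; exact n.succ_pos)
      obtain ⟨e, he⟩ := exists_ne (0 : V)
      have hQ : finrank F (V ⧸ F ∙ e) = n := by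
        rw [finrank_quotient, hn, finrank_span_singleton he]; rfl
      rw [Nat.card_subtype_eq_card_and_add_card_and_not _ (fun W => (F ∙ e) ≤ W),
        card_finrank_eq_succ_and_span_le he, card_finrank_eq_succ_and_not_span_le he,
        ih k hQ, ih (k + 1) hQ, gaussBinom]
      ring

theorem ncard_finrank_eq_sdiff_le [Finite F] (U : Submodule F V) (k : ℕ) :
    ({T : Submodule F V | finrank F T = k} \ {T | T ≤ U ∧ finrank F T = k}).ncard =
      gaussBinom (Nat.card F) (finrank F V) k - gaussBinom (Nat.card F) (finrank F U) k := by
  rw [Set.ncard_sdiff fun _ hT => hT.2]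
  exact congrArg₂ (· - ·) (card_finrank_eq k)
    ((card_le_finrank_eq_eq_card_submodule U k).trans (card_finrank_eq k))

end Submodule

namespace IsVSPartition

variable {F : Type} [Field F] {t : ℕ}

theorem eq_of_le_finrank_inf {v : ℕ} {P : Set (Submodule F (Fin v → F))} (hP : IsVSPartition t P)
    {U W : Submodule F (Fin v → F)} (hU : U ∈ P) (hW : W ∈ P) (h : t ≤ finrank F ↥(U ⊓ W)) :
    U = W := by
  obtain ⟨T, hT, hTt⟩ := (U ⊓ W).exists_le_finrank_eq_s4 h
  exact (hP.2 T hTt).unique ⟨hU, hT.trans inf_le_left⟩ ⟨hW, hT.trans inf_le_right⟩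

variable {P : Set (Submodule F (Fin (t + 2) → F))} {U : Submodule F (Fin (t + 2) → F)}

theorem finrank_eq_and_not_le_of_ne (hP : IsVSPartition t P) (hU : U ∈ P)
    (hUdim : finrank F U = t + 1) {W : Submodule F (Fin (t + 2) → F)} (hW : W ∈ P)
    (hne : U ≠ W) : finrank F W = t ∧ ¬W ≤ U := by
  have hinf : finrank F ↥(U ⊓ W) < t :=
    lt_of_not_ge fun h => hne (hP.eq_of_le_finrank_inf hU hW h)
  refine ⟨?_, fun hWU => ?_⟩
  · have hsup := Submodule.finrank_sup_add_finrank_inf_eq U W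
    have := (U ⊔ W).finrank_le
    rw [finrank_fin_fun] at this
    linarith [hP.1 W hW]
  · rw [inf_eq_right.mpr hWU] at hinf
    exact (hP.1 W hW).not_gt hinf

theorem eq_insert_of_finrank_eq (hP : IsVSPartition t P) (hU : U ∈ P)
    (hUdim : finrank F U = t + 1) :
    P = insert U {T : Submodule F (Fin (t + 2) → F) | finrank F T = t ∧ ¬T ≤ U} := by
  ext W
  refine ⟨fun hW => ?_, ?_⟩
  · rcases eq_or_ne U W with rfl | hne
    · exact Set.mem_insert _ _
    · exact Set.mem_insert_of_mem _ (hP.finrank_eq_and_not_le_of_ne hU hUdim hW hne)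
  · rintro (rfl | ⟨hWt, hWU⟩)
    · exact hU
    obtain ⟨Z, ⟨hZ, hWZ⟩, -⟩ := hP.2 W hWt
    have hne : U ≠ Z := by rintro rfl; exact hWU hWZ
    have hZt := (hP.finrank_eq_and_not_le_of_ne hU hUdim hZ hne).1
    rwa [Submodule.eq_of_le_of_finrank_eq hWZ (hWt.trans hZt.symm)]

end IsVSPartition

theorem nontrivial_partition_dim_t_add_two_general (q t : ℕ)
    (F : Type) [Field F] [Fintype F] (hq : Fintype.card F = q)
    (P : Set (Submodule F (Fin (t + 2) → F))) (hP : IsVSPartition t P)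
    (hnt : ¬ ∀ U ∈ P, finrank F U = t ∨ finrank F U = t + 2) :
    ∃ U : Submodule F (Fin (t + 2) → F), finrank F U = t + 1 ∧
      P = insert U {T : Submodule F (Fin (t + 2) → F) | finrank F T = t ∧ ¬ T ≤ U} ∧
      {W ∈ P | finrank F W = t + 1}.ncard = 1 ∧
      {W ∈ P | finrank F W = t}.ncard = gaussBinom q (t + 2) t - gaussBinom q (t + 1) t := by
  push Not at hnt
  obtain ⟨U, hU, hUt, hUt2⟩ := hnt
  have hUdim : finrank F U = t + 1 := by
    have := U.finrank_le
    rw [finrank_fin_fun] at this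
    have := hP.1 U hU
    omega
  have hPU := hP.eq_insert_of_finrank_eq hU hUdim
  refine ⟨U, hUdim, hPU, ?_, ?_⟩
  · rw [hPU, Submodule.sep_insert_finrank_eq_succ hUdim, Set.ncard_singleton]
  · rw [hPU, Submodule.sep_insert_finrank_eq hUt, Submodule.ncard_finrank_eq_sdiff_le,
      finrank_fin_fun, hUdim, Nat.card_eq_fintype_card, hq]

/-- Every non-trivial vector space `t`-partition of `F_q^(t+2)` has type
`(t+1)^1 t^([t+2,t]_q − [t+1,t]_q)`; it consists of one `(t+1)`-subspace `U` together
with all `t`-subspaces not contained in `U`. -/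
theorem nontrivial_partition_dim_t_add_two (q t : ℕ) (ht : 1 ≤ t)
    (F : Type) [Field F] [Fintype F] (hq : Fintype.card F = q)
    (P : Set (Submodule F (Fin (t + 2) → F))) (hP : IsVSPartition t P)
    (hnt : ¬ ∀ U ∈ P, finrank F U = t ∨ finrank F U = t + 2) :
    ∃ U : Submodule F (Fin (t + 2) → F), finrank F U = t + 1 ∧
      P = insert U {T : Submodule F (Fin (t + 2) → F) | finrank F T = t ∧ ¬ T ≤ U} ∧
      {W ∈ P | finrank F W = t + 1}.ncard = 1 ∧
      {W ∈ P | finrank F W = t}.ncard = gaussBinom q (t + 2) t - gaussBinom q (t + 1) t :=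
  nontrivial_partition_dim_t_add_two_general q t F hq P hP hnt
end

section
/- Let q be a prime power and k, t, v non-negative integers with k ≥ t + 2 and v ≥ 2k − t + 1. Then there exists a vector space (t+1)-partition of 𝔽_q^v of type (v−k+t)^1 k^m (t+1)^⋆, where m = q^{max{k, v−k} · (min{k, v−k} − k + t + 1)}; that is, a vector space (t+1)-partition containing exactly one (v−k+t)-dimensional subspace, exactly m k-dimensional subspaces, and otherwise only (t+1)-dimensional subspaces. -/
open Module

/-!
Let `n = max k (v - k)`, `κ = min k (v - k) + t + 1 - k` and `K = 𝔽_{q^n}`. A nonzero linearized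
polynomial `∑_{i<κ} cᵢ X^{q^i}` over `K` has at most `q^{κ-1}` roots, so its kernel, an
`𝔽_q`-subspace of `K`, has dimension at most `κ - 1`. Precomposing with an embedding
`𝔽_q^k ↪ K` and postcomposing with a projection `K ↠ 𝔽_q^{v-k}` (whose kernel has dimension
`n - (v - k)`) yields `q^{nκ}` linear maps `𝔽_q^k → 𝔽_q^{v-k}` whose pairwise differences have
kernels of dimension at most `κ - 1 + n - (v - k) = t`: a Gabidulin code.

In `𝔽_q^k × 𝔽_q^{v-k}`, the graphs of these maps and `S = W × 𝔽_q^{v-k}` with `dim W = t` meet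
pairwise in dimension at most `t`, since `graph f ∩ graph g ≅ ker (f - g)` and
`graph f ∩ S ≅ W`. Hence no `(t+1)`-space lies in two of them, and adding all the `(t+1)`-spaces
that lie in none of them gives the partition.
-/

open Polynomial LinearMap

section LinearAlgebra

variable {F M N P : Type*} [Field F] [AddCommGroup M] [Module F M] [AddCommGroup N] [Module F N]
  [AddCommGroup P] [Module F P]

theorem LinearMap.finrank_comap_le [FiniteDimensional F M] [FiniteDimensional F N]
    (f : M →ₗ[F] N) (p : Submodule F N) :
    finrank F (p.comap f) ≤ finrank F p + finrank F (ker f) := by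
  have := f.lift_rank_comap_le p
  simp only [← finrank_eq_rank, Cardinal.lift_natCast] at this
  exact_mod_cast this

theorem LinearMap.finrank_ker_comp_le [FiniteDimensional F M] [FiniteDimensional F N]
    (f : M →ₗ[F] N) (g : N →ₗ[F] P) :
    finrank F (ker (g ∘ₗ f)) ≤ finrank F (ker g) + finrank F (ker f) := by
  rw [ker_comp]
  exact f.finrank_comap_le _

theorem LinearMap.graph_injective : Function.Injective (graph : (M →ₗ[F] N) → _) := by
  intro f g h
  ext x
  have hx : (x, f x) ∈ g.graph := h ▸ (mem_graph_iff _ _).2 rfl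
  exact (mem_graph_iff _ _).1 hx

theorem LinearMap.finrank_graph [FiniteDimensional F M] (f : M →ₗ[F] N) :
    finrank F f.graph = finrank F M := by
  rw [graph_eq_range_prod, finrank_range_of_inj fun x y h => congr_arg Prod.fst h]

theorem LinearMap.finrank_graph_inf (f : M →ₗ[F] N) (U : Submodule F (M × N)) :
    finrank F ↥(f.graph ⊓ U) = finrank F (U.comap (id.prod f)) := by
  rw [graph_eq_range_prod, ← Submodule.map_comap_eq]
  exact (Submodule.equivMapOfInjective _ (fun x y h => congr_arg Prod.fst h) _).finrank_eq.symm

theorem LinearMap.comap_prod_graph (f g : M →ₗ[F] N) :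
    g.graph.comap (id.prod f) = ker (f - g) := by
  ext x
  simp [mem_graph_iff, sub_eq_zero]

theorem LinearMap.comap_prod_prod_top (f : M →ₗ[F] N) (W : Submodule F M) :
    (W.prod ⊤).comap (id.prod f) = W := by
  ext x
  simp

theorem Submodule.exists_finrank_eq [FiniteDimensional F M] {d : ℕ} (hd : d ≤ finrank F M) :
    ∃ W : Submodule F M, finrank F W = d := by
  let b := Module.finBasis F M
  refine ⟨Submodule.span F (Set.range (b ∘ Fin.castLE hd)), ?_⟩
  rw [finrank_span_eq_card (b.linearIndependent.comp _ (Fin.castLE_injective hd)),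
    Fintype.card_fin]

theorem Submodule.finrank_prod (p : Submodule F M) (q : Submodule F N) [FiniteDimensional F p]
    [FiniteDimensional F q] : finrank F (p.prod q) = finrank F p + finrank F q := by
  let e : p.prod q ≃ₗ[F] p × q :=
    { toFun := fun z => (⟨z.1.1, z.2.1⟩, ⟨z.1.2, z.2.2⟩)
      invFun := fun w => ⟨(w.1, w.2), w.1.2, w.2.2⟩
      left_inv := fun _ => rfl
      right_inv := fun _ => rfl
      map_add' := fun _ _ => rfl
      map_smul' := fun _ _ => rfl }
  rw [e.finrank_eq, Module.finrank_prod]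

theorem pairwise_finrank_inf_graph_le {t : ℕ} (W : Submodule F M) (hW : finrank F W ≤ t)
    (𝒜 : Set (M →ₗ[F] N)) (h𝒜 : 𝒜.Pairwise fun f g => finrank F (ker (f - g)) ≤ t) :
    (insert (W.prod ⊤) (graph '' 𝒜)).Pairwise fun U U' => finrank F ↥(U ⊓ U') ≤ t := by
  have : Std.Symm fun U U' : Submodule F (M × N) => finrank F ↥(U ⊓ U') ≤ t :=
    ⟨fun U U' h => by rwa [inf_comm]⟩
  rw [Set.pairwise_insert_of_symm, graph_injective.injOn.pairwise_image]
  refine ⟨fun f hf g hg hfg => ?_, ?_⟩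
  · change finrank F ↥(f.graph ⊓ g.graph) ≤ t
    rw [finrank_graph_inf, comap_prod_graph]
    exact h𝒜 hf hg hfg
  · rintro _ ⟨f, -, rfl⟩ -
    rwa [inf_comm, finrank_graph_inf, comap_prod_prod_top]

end LinearAlgebra

section LinearizedPolynomial

variable (F K : Type*) [Field F] [Fintype F] [Field K] [Algebra F K] (κ : ℕ)

noncomputable def qLinearized : (Fin κ → K) →ₗ[K] Module.End F K :=
  Fintype.linearCombination K fun i => (FiniteField.frobeniusAlgHom F K).toLinearMap ^ (i : ℕ)

variable {F K κ}

theorem qLinearized_apply (c : Fin κ → K) (x : K) :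
    qLinearized F K κ c x = ∑ i, c i * x ^ Fintype.card F ^ (i : ℕ) := by
  simp [qLinearized, Fintype.linearCombination_apply, Module.End.pow_apply,
    FiniteField.coe_frobeniusAlgHom, pow_iterate]

theorem finrank_ker_qLinearized_le {c : Fin κ → K} (hc : c ≠ 0) :
    finrank F (ker (qLinearized F K κ c)) ≤ κ - 1 := by
  classical
  set q := Fintype.card F
  have hq : 1 < q := Fintype.one_lt_card
  let f : K[X] := ∑ i : Fin κ, monomial (q ^ (i : ℕ)) (c i)
  obtain ⟨i₀, hi₀⟩ := Function.ne_iff.1 hc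
  have hf : f ≠ 0 := fun h => hi₀ <| by
    simpa [f, finsetSum_coeff, coeff_monomial, (Nat.pow_right_injective hq).eq_iff,
      Fin.val_inj] using congr_arg (coeff · (q ^ (i₀ : ℕ))) h
  have hdeg : f.natDegree ≤ q ^ (κ - 1) :=
    natDegree_sum_le_of_forall_le _ _ fun i _ =>
      (natDegree_monomial_le _).trans (Nat.pow_le_pow_right hq.le (by omega))
  have hroots : (ker (qLinearized F K κ c) : Set K) ⊆ f.roots.toFinset := fun x hx => by
    simpa [f, mem_roots hf, eval_finsetSum, qLinearized_apply] using hx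
  have : Finite (ker (qLinearized F K κ c)) :=
    (f.roots.toFinset.finite_toSet.subset hroots).to_subtype
  have hcard : q ^ finrank F (ker (qLinearized F K κ c)) ≤ q ^ (κ - 1) := calc
    _ = (ker (qLinearized F K κ c) : Set K).ncard := by
      rw [← Nat.card_coe_set_eq, SetLike.coe_sort_coe, Module.natCard_eq_pow_finrank (K := F),
        Nat.card_eq_fintype_card]
    _ ≤ f.roots.toFinset.card := by simpa using Set.ncard_le_ncard hroots
    _ ≤ f.natDegree := (Multiset.toFinset_card_le _).trans (card_roots' f)
    _ ≤ q ^ (κ - 1) := hdeg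
  exact (Nat.pow_le_pow_iff_right hq).1 hcard

end LinearizedPolynomial

theorem exists_addMonoidHom_finrank_ker_le (F K : Type*) [Field F] [Fintype F] [Field K]
    [Algebra F K] [FiniteDimensional F K] {k m t κ : ℕ} (hk : k ≤ finrank F K)
    (hm : m ≤ finrank F K) (ht : κ - 1 + (finrank F K - m) ≤ t) :
    ∃ A : (Fin κ → K) →+ ((Fin k → F) →ₗ[F] (Fin m → F)),
      ∀ c ≠ 0, finrank F (ker (A c)) ≤ t := by
  obtain ⟨ι, hι⟩ := finrank_le_iff_exists_linearMap.1
    (by simpa using hk : finrank F (Fin k → F) ≤ finrank F K)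
  obtain ⟨j, hj⟩ := finrank_le_iff_exists_linearMap.1
    (by simpa using hm : finrank F (Fin m → F) ≤ finrank F K)
  obtain ⟨π, hπ⟩ := j.exists_leftInverse_of_injective (ker_eq_bot.2 hj)
  have hkerπ : finrank F (ker π) = finrank F K - m := by
    have hπsurj : Function.Surjective π := fun y => ⟨j y, LinearMap.congr_fun hπ y⟩
    have := π.finrank_range_add_finrank_ker
    rw [range_eq_top.2 hπsurj, finrank_top, finrank_fin_fun] at this
    omega
  refine ⟨{ toFun := fun c => π ∘ₗ qLinearized F K κ c ∘ₗ ι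
            map_zero' := by simp
            map_add' := by simp [LinearMap.add_comp, LinearMap.comp_add] }, fun c hc => ?_⟩
  have hL := finrank_ker_qLinearized_le (F := F) hc
  calc finrank F (ker (π ∘ₗ qLinearized F K κ c ∘ₗ ι))
      ≤ finrank F (ker π) + finrank F (ker (qLinearized F K κ c ∘ₗ ι)) :=
        finrank_ker_comp_le (qLinearized F K κ c ∘ₗ ι) π
    _ ≤ finrank F (ker π) + (finrank F (ker (qLinearized F K κ c)) + finrank F (ker ι)) :=
        Nat.add_le_add_left (finrank_ker_comp_le ι (qLinearized F K κ c)) _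
    _ ≤ t := by
        rw [ker_eq_bot.2 hι, finrank_bot]
        omega

theorem isVSPartition_union_uncovered {F : Type} [Field F] {v : ℕ} (t : ℕ)
    (B : Set (Submodule F (Fin v → F))) (hdim : ∀ U ∈ B, t + 1 ≤ finrank F U)
    (hinf : B.Pairwise fun U W => finrank F ↥(U ⊓ W) ≤ t) :
    IsVSPartition (t + 1) (B ∪ {T | finrank F T = t + 1 ∧ ∀ U ∈ B, ¬T ≤ U}) := by
  refine ⟨?_, fun T hT => ?_⟩
  · rintro U (hU | ⟨hU, -⟩)
    exacts [hdim U hU, hU.ge]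
  by_cases hcov : ∃ U ∈ B, T ≤ U
  · obtain ⟨U, hU, hTU⟩ := hcov
    refine ⟨U, ⟨.inl hU, hTU⟩, ?_⟩
    rintro W ⟨hW | ⟨hW, hWB⟩, hTW⟩
    · by_contra hne
      have := Submodule.finrank_mono (le_inf hTW hTU)
      have := hinf hW hU hne
      omega
    · have hTW : T = W := Submodule.eq_of_le_of_finrank_le hTW (hW.trans hT.symm).le
      exact absurd (hTW ▸ hTU) (hWB U hU)
  · push Not at hcov
    refine ⟨T, ⟨.inr ⟨hT, hcov⟩, le_rfl⟩, ?_⟩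
    rintro W ⟨hW | ⟨hW, -⟩, hTW⟩
    · exact absurd hTW (hcov W hW)
    · exact (Submodule.eq_of_le_of_finrank_le hTW (hW.trans hT.symm).le).symm

theorem exists_pairwise_finrank_inf_le_of_pairwise_finrank_ker_sub_le {F : Type} [Field F]
    {k t v : ℕ} (htk : t ≤ k) (hkv : k ≤ v) (𝒜 : Set ((Fin k → F) →ₗ[F] (Fin (v - k) → F)))
    (h𝒜 : 𝒜.Pairwise fun f g => finrank F (ker (f - g)) ≤ t) :
    ∃ (S : Submodule F (Fin v → F)) (Ψ : ((Fin k → F) →ₗ[F] (Fin (v - k) → F)) →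
      Submodule F (Fin v → F)), Function.Injective Ψ ∧ finrank F S = v - k + t ∧
      (∀ f, finrank F (Ψ f) = k) ∧
      (insert S (Ψ '' 𝒜)).Pairwise fun U U' => finrank F ↥(U ⊓ U') ≤ t := by
  obtain ⟨W, hW⟩ := Submodule.exists_finrank_eq (F := F) (M := Fin k → F) (d := t)
    (by rwa [finrank_fin_fun])
  let e : ((Fin k → F) × (Fin (v - k) → F)) ≃ₗ[F] (Fin v → F) :=
    .ofFinrankEq _ _ (by simp; omega)
  let Φ := Submodule.map (e : ((Fin k → F) × (Fin (v - k) → F)) →ₗ[F] (Fin v → F))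
  have hΦ : Function.Injective Φ := Submodule.map_injective_of_injective e.injective
  refine ⟨Φ (W.prod ⊤), Φ ∘ graph, hΦ.comp graph_injective, ?_, fun f => ?_, ?_⟩
  · rw [e.finrank_map_eq, Submodule.finrank_prod, hW, finrank_top, finrank_fin_fun]
    omega
  · rw [Function.comp_apply, e.finrank_map_eq, finrank_graph, finrank_fin_fun]
  · rw [Set.image_comp, ← Set.image_insert_eq, hΦ.injOn.pairwise_image]
    intro U hU U' hU' hne
    change finrank F ↥(Φ U ⊓ Φ U') ≤ t
    rw [← Submodule.map_inf _ e.injective, e.finrank_map_eq]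
    exact pairwise_finrank_inf_graph_le W hW.le 𝒜 h𝒜 hU hU' hne

theorem exists_vsPartition_of_pairwise_finrank_ker_sub_le {F : Type} [Field F] {k t v : ℕ}
    (hk : t + 2 ≤ k) (hv : 2 * k + 1 ≤ v + t)
    (𝒜 : Set ((Fin k → F) →ₗ[F] (Fin (v - k) → F)))
    (h𝒜 : 𝒜.Pairwise fun f g => finrank F (ker (f - g)) ≤ t) :
    ∃ P : Set (Submodule F (Fin v → F)), IsVSPartition (t + 1) P ∧
      {U ∈ P | finrank F U = v - k + t}.ncard = 1 ∧
      {U ∈ P | finrank F U = k}.ncard = 𝒜.ncard ∧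
      ∀ U ∈ P, finrank F U = v - k + t ∨ finrank F U = k ∨ finrank F U = t + 1 := by
  obtain ⟨S, Ψ, hΨ, hS, hΨk, hpair⟩ :=
    exists_pairwise_finrank_inf_le_of_pairwise_finrank_ker_sub_le (by omega) (by omega) 𝒜 h𝒜
  let R := {T : Submodule F (Fin v → F) |
    finrank F T = t + 1 ∧ ∀ U ∈ insert S (Ψ '' 𝒜), ¬T ≤ U}
  have hG : ∀ U ∈ Ψ '' 𝒜, finrank F U = k := by
    rintro _ ⟨f, -, rfl⟩
    exact hΨk f
  have hpart : IsVSPartition (t + 1) (insert S (Ψ '' 𝒜) ∪ R) := by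
    refine isVSPartition_union_uncovered t _ ?_ hpair
    rintro U (rfl | hU)
    · omega
    · rw [hG U hU]; omega
  refine ⟨insert S (Ψ '' 𝒜) ∪ R, hpart, ?_, ?_, ?_⟩
  · rw [Set.ncard_eq_one]
    refine ⟨S, Set.ext fun U => ⟨?_, ?_⟩⟩
    · rintro ⟨(rfl | hU) | hU, hdim⟩
      · rfl
      · have := hG U hU; omega
      · have := hU.1; omega
    · rintro rfl
      exact ⟨.inl (.inl rfl), hS⟩
  · have : {U ∈ insert S (Ψ '' 𝒜) ∪ R | finrank F U = k} = Ψ '' 𝒜 := by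
      refine Set.ext fun U => ⟨?_, fun hU => ⟨.inl (.inr hU), hG U hU⟩⟩
      rintro ⟨(rfl | hU) | hU, hdim⟩
      · omega
      · exact hU
      · have := hU.1; omega
    rw [this, Set.ncard_image_of_injective _ hΨ]
  · rintro U ((rfl | hU) | hU)
    exacts [.inl hS, .inr (.inl (hG U hU)), .inr (.inr hU.1)]

/-- For `k ≥ t + 2` and `v ≥ 2k − t + 1` there exists a vector space `(t+1)`-partition
of `F_q^v` of type `(v−k+t)^1 k^m (t+1)^⋆` with
`m = q^(max{k, v−k} · (min{k, v−k} − k + t + 1))`. -/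
theorem mrd_construction (q k t v : ℕ)
    (F : Type) [Field F] [Fintype F] (hq : Fintype.card F = q)
    (hk : t + 2 ≤ k) (hv : 2 * k + 1 ≤ v + t) :
    ∃ P : Set (Submodule F (Fin v → F)), IsVSPartition (t + 1) P ∧
      {U ∈ P | finrank F U = v - k + t}.ncard = 1 ∧
      {U ∈ P | finrank F U = k}.ncard
        = q ^ (max k (v - k) * (min k (v - k) + t + 1 - k)) ∧
      ∀ U ∈ P, finrank F U = v - k + t ∨ finrank F U = k ∨ finrank F U = t + 1 := by
  have : Fact (ringChar F).Prime := ⟨CharP.char_is_prime F _⟩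
  have : NeZero (max k (v - k)) := ⟨by omega⟩
  let K := FiniteField.Extension F (ringChar F) (max k (v - k))
  have hK : finrank F K = max k (v - k) := FiniteField.finrank_extension ..
  obtain ⟨A, hA⟩ := exists_addMonoidHom_finrank_ker_le F K (k := k) (m := v - k) (t := t)
    (κ := min k (v - k) + t + 1 - k) (by omega) (by omega) (by omega)
  have hAinj : Function.Injective A := by
    refine (injective_iff_map_eq_zero A).2 fun c hc => by_contra fun hne => ?_
    have := hA c hne
    rw [hc, ker_zero, finrank_top, finrank_fin_fun] at this
    omega
  obtain ⟨P, hP, hS, hG, htype⟩ := exists_vsPartition_of_pairwise_finrank_ker_sub_le hk hv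
    (Set.range A) (by
      rintro _ ⟨c, rfl⟩ _ ⟨c', rfl⟩ hne
      rw [← map_sub]
      exact hA _ (sub_ne_zero.2 (ne_of_apply_ne A hne)))
  refine ⟨P, hP, hS, ?_, htype⟩
  rw [hG, Set.ncard_range_of_injective hAinj, Nat.card_fun, Nat.card_fin,
    FiniteField.natCard_extension, Nat.card_eq_fintype_card, hq, pow_mul]
end

section
/- Let q be a prime power and k, v integers with k ≥ 3 and v ≥ 2k. If 𝒫 is a vector space 2-partition of 𝔽_q^v of type (v−k+1)^1 k^a 2^⋆ (i.e., 𝒫 contains exactly one (v−k+1)-dimensional subspace, exactly a k-dimensional subspaces, and otherwise only 2-dimensional subspaces), then a ≤ q^{2(v−k)}. -/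
open Module

open Submodule Finset

section

variable {K V : Type*} [Field K] [AddCommGroup V] [Module K V]

lemma Submodule.exists_le_finrank_eq_s6 {N : Submodule K V} [FiniteDimensional K N] {n : ℕ}
    (hn : n ≤ finrank K N) :
    ∃ T ≤ N, finrank K T = n := by
  obtain ⟨f, hf⟩ := exists_linearIndependent_of_le_finrank hn
  refine ⟨span K (Set.range (N.subtype ∘ f)), ?_, ?_⟩
  · rw [span_le, Set.range_comp]
    exact fun _ ⟨y, _, hy⟩ => hy ▸ y.2
  · rw [finrank_span_eq_card (hf.map' N.subtype N.ker_subtype), Fintype.card_fin]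

lemma Submodule.one_lt_finrank_of_mem {N : Submodule K V} [FiniteDimensional K N] {x y : V}
    (hx : x ∈ N) (hy : y ∈ N) (hx0 : x ≠ 0) (hyx : y ∉ span K {x}) : 1 < finrank K N := by
  rw [← finrank_span_singleton (K := K) hx0]
  refine finrank_lt_finrank_of_lt (lt_of_le_of_ne ((span_singleton_le_iff_mem x N).2 hx) ?_)
  rintro rfl
  exact hyx hy

lemma Submodule.finrank_inf_sup_span_singleton [FiniteDimensional K V] {S W : Submodule K V}
    {x : V} (hxS : x ∈ S) (hxW : x ∉ W) :
    finrank K ↥(S ⊓ (W ⊔ span K {x})) = finrank K ↥(S ⊓ W) + 1 := by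
  rw [← inf_sup_assoc_of_le W ((span_singleton_le_iff_mem x S).2 hxS),
    finrank_sup_span_singleton fun h => hxW (mem_inf.1 h).2]

end

section Counting

variable {F V : Type*} [Field F] [Fintype F] [AddCommGroup V] [Module F V] [Fintype V]

open scoped Classical in
noncomputable def sdiffFinset (S W : Submodule F V) : Finset V := {x | x ∈ S ∧ x ∉ W}

/-- The pairs `(x, y)` of vectors of `S` whose images in `V ⧸ W` are linearly independent. -/
noncomputable def indepPairsModulo (S W : Submodule F V) : Finset ((_ : V) × V) :=
  (sdiffFinset S W).sigma fun x => sdiffFinset S (W ⊔ span F {x})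

omit [Fintype F] in
lemma mem_indepPairsModulo {S W : Submodule F V} {p : (_ : V) × V} :
    p ∈ indepPairsModulo S W ↔ (p.1 ∈ S ∧ p.1 ∉ W) ∧ p.2 ∈ S ∧ p.2 ∉ W ⊔ span F {p.1} := by
  simp [indepPairsModulo, sdiffFinset]

omit [Fintype F] in
lemma indepPairsModulo_mono {S S' : Submodule F V} (h : S ≤ S') (W : Submodule F V) :
    indepPairsModulo S W ⊆ indepPairsModulo S' W := fun p hp => by
  rw [mem_indepPairsModulo] at hp ⊢
  exact ⟨⟨h hp.1.1, hp.1.2⟩, h hp.2.1, hp.2.2⟩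

lemma card_sdiffFinset (S W : Submodule F V) :
    (sdiffFinset S W).card =
      Fintype.card F ^ finrank F S - Fintype.card F ^ finrank F ↥(S ⊓ W) := by
  classical
  have card_mem (N : Submodule F V) :
      (univ.filter (· ∈ N)).card = Fintype.card F ^ finrank F N := by
    rw [← Fintype.card_subtype, card_eq_pow_finrank (K := F)]
  have h : sdiffFinset S W = univ.filter (· ∈ S) \ univ.filter (· ∈ S ⊓ W) := by
    ext x
    simp only [sdiffFinset, mem_filter, mem_univ, true_and, mem_sdiff, Submodule.mem_inf]
    tauto
  rw [h, card_sdiff_of_subset fun x => by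
    simp only [mem_filter, mem_univ, true_and, Submodule.mem_inf]; exact And.left,
    card_mem, card_mem]

lemma card_indepPairsModulo (S W : Submodule F V) :
    (indepPairsModulo S W).card =
      (Fintype.card F ^ finrank F S - Fintype.card F ^ finrank F ↥(S ⊓ W)) *
        (Fintype.card F ^ finrank F S - Fintype.card F ^ (finrank F ↥(S ⊓ W) + 1)) := by
  rw [indepPairsModulo, card_sigma, sum_const_nat fun x hx => ?_, card_sdiffFinset]
  have hx : x ∈ S ∧ x ∉ W := by simpa [sdiffFinset] using hx
  rw [card_sdiffFinset, finrank_inf_sup_span_singleton hx.1 hx.2]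

end Counting

section Partition

variable {F : Type} [Field F] {v t : ℕ} {P : Set (Submodule F (Fin v → F))}

lemma IsVSPartition.finrank_inf_lt_s6 (hP : IsVSPartition t P) {U U' : Submodule F (Fin v → F)}
    (hU : U ∈ P) (hU' : U' ∈ P) (hne : U ≠ U') : finrank F ↥(U ⊓ U') < t := by
  by_contra! h
  obtain ⟨T, hT, hTt⟩ := exists_le_finrank_eq_s6 h
  exact hne ((hP.2 T hTt).unique ⟨hU, hT.trans inf_le_left⟩ ⟨hU', hT.trans inf_le_right⟩)

lemma IsVSPartition.finrank_inf_eq_one (hP : IsVSPartition 2 P) {U U' : Submodule F (Fin v → F)}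
    (hU : U ∈ P) (hU' : U' ∈ P) (hne : U ≠ U') (hdim : v < finrank F U + finrank F U') :
    finrank F ↥(U ⊓ U') = 1 := by
  have hsup : finrank F ↥(U ⊔ U') ≤ v := (finrank_le _).trans_eq (finrank_fin_fun F)
  have := finrank_sup_add_finrank_inf_eq U U'
  have := hP.finrank_inf_lt_s6 hU hU' hne
  omega

variable [Fintype F]

lemma IsVSPartition.pairwiseDisjoint_indepPairsModulo (hP : IsVSPartition 2 P)
    (W : Submodule F (Fin v → F)) : P.PairwiseDisjoint (indepPairsModulo · W) := by
  intro U hU U' hU' hne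
  refine disjoint_left.2 fun p hp hp' => ?_
  rw [mem_indepPairsModulo] at hp hp'
  have hx0 : p.1 ≠ 0 := fun h => hp.1.2 (h ▸ W.zero_mem)
  have hyx : p.2 ∉ span F {p.1} := fun h => hp.2.2 (mem_sup_right h)
  have := one_lt_finrank_of_mem (mem_inf.2 ⟨hp.1.1, hp'.1.1⟩) (mem_inf.2 ⟨hp.2.1, hp'.2.1⟩)
    hx0 hyx
  exact (hP.finrank_inf_lt_s6 hU hU' hne).not_ge this

lemma IsVSPartition.sum_card_indepPairsModulo_le (hP : IsVSPartition 2 P)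
    {s : Finset (Submodule F (Fin v → F))} (hs : ↑s ⊆ P) (W : Submodule F (Fin v → F)) :
    ∑ U ∈ s, (indepPairsModulo U W).card ≤ (indepPairsModulo ⊤ W).card := by
  classical
  rw [← card_biUnion ((hP.pairwiseDisjoint_indepPairsModulo W).subset hs)]
  exact card_le_card (biUnion_subset.2 fun U _ => indepPairsModulo_mono le_top W)

end Partition

lemma Nat.pow_add_sub_pow_add (q c i j : ℕ) :
    q ^ (c + i) - q ^ (c + j) = q ^ c * (q ^ i - q ^ j) := by
  rw [pow_add, pow_add, ← Nat.mul_sub]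

theorem mrd_like_bound_general (q k v a : ℕ) (hk : 3 ≤ k) (hv : 2 * k ≤ v)
    (F : Type) [Field F] [Fintype F] (hq : Fintype.card F = q)
    (P : Set (Submodule F (Fin v → F))) (hP : IsVSPartition 2 P)
    (h1 : {U ∈ P | finrank F U = v - k + 1}.ncard = 1)
    (h2 : {U ∈ P | finrank F U = k}.ncard = a) :
    a ≤ q ^ (2 * (v - k)) := by
  obtain ⟨W, hW⟩ := Set.ncard_eq_one.1 h1
  obtain ⟨hWP, hWdim⟩ : W ∈ P ∧ finrank F W = v - k + 1 :=
    (Set.ext_iff.1 hW W).2 rfl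
  set s := (Set.toFinite {U ∈ P | finrank F U = k}).toFinset
  have hs : ∀ U ∈ s, U ∈ P ∧ finrank F U = k := fun U hU => by simpa [s] using hU
  have hcard_U : ∀ U ∈ s, (indepPairsModulo U W).card = (q ^ k - q ^ 1) * (q ^ k - q ^ 2) :=
    fun U hU => by
      obtain ⟨hUP, hUdim⟩ := hs U hU
      have hne : U ≠ W := by rintro rfl; omega
      rw [card_indepPairsModulo, hUdim, hP.finrank_inf_eq_one hUP hWP hne (by omega), hq]
  have hsum := hP.sum_card_indepPairsModulo_le (fun U hU => (hs U hU).1) W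
  rw [sum_const_nat hcard_U, ← Set.ncard_eq_toFinset_card _, h2, card_indepPairsModulo,
    top_inf_eq, finrank_top, finrank_fin_fun, hWdim, hq] at hsum
  have hfactor : (q ^ v - q ^ (v - k + 1)) * (q ^ v - q ^ (v - k + 1 + 1)) =
      q ^ (2 * (v - k)) * ((q ^ k - q ^ 1) * (q ^ k - q ^ 2)) := by
    obtain ⟨m, rfl⟩ : ∃ m, v = m + k := ⟨v - k, by omega⟩
    rw [Nat.add_sub_cancel, add_assoc, Nat.pow_add_sub_pow_add, Nat.pow_add_sub_pow_add,
      mul_mul_mul_comm, ← pow_add, ← two_mul]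
  have hq1 : 1 < q := hq ▸ Fintype.one_lt_card
  refine Nat.le_of_mul_le_mul_right (hfactor ▸ hsum) (Nat.mul_pos ?_ ?_) <;>
    exact Nat.sub_pos_of_lt (Nat.pow_lt_pow_right hq1 (by omega))

/-- If `P` is a vector space `2`-partition of `F_q^v` of type `(v−k+1)^1 k^a 2^⋆`
with `k ≥ 3` and `v ≥ 2k`, then `a ≤ q^(2(v−k))`. -/
theorem mrd_like_bound (q k v a : ℕ) (hk : 3 ≤ k) (hv : 2 * k ≤ v)
    (F : Type) [Field F] [Fintype F] (hq : Fintype.card F = q)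
    (P : Set (Submodule F (Fin v → F))) (hP : IsVSPartition 2 P)
    (h1 : {U ∈ P | finrank F U = v - k + 1}.ncard = 1)
    (h2 : {U ∈ P | finrank F U = k}.ncard = a)
    (h3 : ∀ U ∈ P, finrank F U = v - k + 1 ∨ finrank F U = k ∨ finrank F U = 2) :
    a ≤ q ^ (2 * (v - k)) :=
  mrd_like_bound_general q k v a hk hv F hq P hP h1 h2
end

section
/- If 𝒫 is a vector space 2-partition of 𝔽_2^7 of type 4^{m_4} 3^{m_3} 2^⋆, then m_3 ≤ 381 − ⌈m_4(61 − m_4)/7⌉. -/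
open Module

/-!
Fix a nonzero vector `x` and let `a`, `b`, `c` be the numbers of members of dimension 4, 3, 2
through `x`. These members partition the vectors outside `⟨x⟩`, so `14a + 6b + 2c = 126`.
Partitioning the 64 vectors outside a hyperplane `H ∋ x` in the same way, where a member of
dimension `d` not inside `H` contributes `2^(d-1)` of them, shows that an even number of the
2-dimensional members through `x` leave `H`; a suitable choice of `H` then rules out `c = 1`
and `c = 2`, and every remaining solution satisfies `b + 5a ≤ 21 + a²`.
Summing over the 127 nonzero `x`, with `Σ a = 15 m₄`, `Σ b = 7 m₃` and
`Σ a² = 15 m₄ + m₄ (m₄ - 1)` (two 4-dimensional members meet in a line), gives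
`7 m₃ ≤ 2667 - 61 m₄ + m₄²`.
-/

open Finset Classical

section LinearAlgebra

variable {F V : Type*} [Field F] [AddCommGroup V] [Module F V]

noncomputable def Finset.ofFinrank (P : Finset (Submodule F V)) (d : ℕ) :
    Finset (Submodule F V) :=
  {U ∈ P | finrank F U = d}

theorem Finset.mem_ofFinrank {P : Finset (Submodule F V)} {d : ℕ} {U : Submodule F V} :
    U ∈ P.ofFinrank d ↔ U ∈ P ∧ finrank F U = d :=
  mem_filter

theorem Finset.card_ofFinrank (P : Finset (Submodule F V)) (d : ℕ) :
    #(P.ofFinrank d) = {U ∈ (P : Set (Submodule F V)) | finrank F U = d}.ncard := by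
  rw [ofFinrank, ← Set.ncard_coe_finset, coe_filter]
  rfl

theorem Finset.ofFinrank_filter (P : Finset (Submodule F V)) (p : Submodule F V → Prop)
    [DecidablePred p] (d : ℕ) : (P.filter p).ofFinrank d = (P.ofFinrank d).filter p :=
  filter_comm _ _ _

theorem Finset.sum_comp_finrank {M : Type*} [AddCommMonoid M] (f : ℕ → M)
    {P : Finset (Submodule F V)} {D : Finset ℕ} (hD : ∀ U ∈ P, finrank F U ∈ D) :
    ∑ U ∈ P, f (finrank F U) = ∑ d ∈ D, #(P.ofFinrank d) • f d := by
  rw [← sum_fiberwise_of_maps_to hD]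
  exact sum_congr rfl fun d _ => sum_eq_card_nsmul fun U hU => by rw [(mem_filter.1 hU).2]

theorem finrank_span_pair {x y : V} (hx : x ≠ 0) (hy : y ∉ F ∙ x) :
    finrank F (Submodule.span F {x, y}) = 2 := by
  have hli : LinearIndependent F ![x, y] := (LinearIndependent.pair_iff' hx).2 fun a h =>
    hy (h ▸ Submodule.smul_mem _ a (Submodule.mem_span_singleton_self x))
  rw [← Matrix.range_cons_cons_empty x y ![], finrank_span_eq_card hli, Fintype.card_fin]

theorem exists_hyperplane_le_notMem [FiniteDimensional F V] {A : Submodule F V} {z : V}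
    (hz : z ∉ A) :
    ∃ H : Submodule F V, finrank F H + 1 = finrank F V ∧ A ≤ H ∧ z ∉ H := by
  obtain ⟨f, hfz, hfA⟩ := Submodule.exists_dual_map_eq_bot_of_notMem hz inferInstance
  exact ⟨LinearMap.ker f, Dual.finrank_ker_add_one_of_ne_zero (fun h => hfz (by simp [h])),
    LinearMap.le_ker_iff_map.2 hfA, hfz⟩

theorem finrank_inf_add_one_of_not_le [FiniteDimensional F V] {U H : Submodule F V}
    (hH : finrank F H + 1 = finrank F V) (hUH : ¬ U ≤ H) :
    finrank F ↥(U ⊓ H) + 1 = finrank F U := by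
  have hsup : finrank F ↥(U ⊔ H) = finrank F V := by
    have hlt : finrank F H < finrank F ↥(U ⊔ H) :=
      Submodule.finrank_lt_finrank_of_lt
        (lt_of_le_of_ne le_sup_right fun h => hUH (h ▸ le_sup_left))
    have := (U ⊔ H).finrank_le
    omega
  have := Submodule.finrank_sup_add_finrank_inf_eq U H
  omega

variable [Fintype F] [Fintype V]

theorem card_filter_mem (W : Submodule F V) :
    #{y | y ∈ W} = Fintype.card F ^ finrank F W := by
  rw [← card_eq_pow_finrank (K := F) (V := W), ← Fintype.card_subtype]

theorem card_filter_mem_notMem_of_le {W U : Submodule F V} (hWU : W ≤ U) :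
    #{y | y ∈ U ∧ y ∉ W} = Fintype.card F ^ finrank F U - Fintype.card F ^ finrank F W := by
  have hsplit : filter (fun y => y ∈ U ∧ y ∉ W) univ =
      filter (· ∈ U) univ \ filter (· ∈ W) univ := by
    ext y; simp
  rw [hsplit, card_sdiff_of_subset (fun y => by simpa using @hWU y), card_filter_mem,
    card_filter_mem]

theorem card_filter_mem_notMem_of_not_le {U H : Submodule F V}
    (hH : finrank F H + 1 = finrank F V) (hUH : ¬ U ≤ H) :
    #{y | y ∈ U ∧ y ∉ H} =
      Fintype.card F ^ finrank F U - Fintype.card F ^ (finrank F U - 1) := by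
  have hinf : filter (fun y => y ∈ U ∧ y ∉ H) univ =
      filter (fun y => y ∈ U ∧ y ∉ U ⊓ H) univ := by
    ext y; simp +contextual
  rw [hinf, card_filter_mem_notMem_of_le inf_le_left, ← finrank_inf_add_one_of_not_le hH hUH,
    Nat.add_sub_cancel]

theorem sum_card_filter_mem_ne_zero [DecidableEq V] {ι : Type*} (Q : Finset ι)
    (W : ι → Submodule F V) :
    ∑ x ∈ {x : V | x ≠ 0}, #{i ∈ Q | x ∈ W i} =
      ∑ i ∈ Q, (Fintype.card F ^ finrank F (W i) - 1) := by
  refine (sum_card_bipartiteAbove_eq_sum_card_bipartiteBelow (fun x i => x ∈ W i)).trans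
    (sum_congr rfl fun i _ => ?_)
  have h := card_filter_mem_notMem_of_le (bot_le : ⊥ ≤ W i)
  simp only [Submodule.mem_bot, finrank_bot, pow_zero] at h
  rw [← h, bipartiteBelow, filter_filter]
  exact congrArg card (filter_congr fun y _ => and_comm)

theorem sum_card_filter_mem_of_finrank_eq [DecidableEq V] {Q : Finset (Submodule F V)} {d : ℕ}
    (hQ : ∀ U ∈ Q, finrank F U = d) :
    ∑ x ∈ {x : V | x ≠ 0}, #{U ∈ Q | x ∈ U} = #Q * (Fintype.card F ^ d - 1) :=
  (sum_card_filter_mem_ne_zero Q id).trans (sum_const_nat fun U hU => by rw [id, hQ U hU])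

theorem sum_sq_card_filter_mem_ne_zero [DecidableEq V] {ι : Type*} (Q : Finset ι)
    (W : ι → Submodule F V) :
    ∑ x ∈ {x : V | x ≠ 0}, #{i ∈ Q | x ∈ W i} ^ 2 =
      ∑ i ∈ Q, ∑ j ∈ Q, (Fintype.card F ^ finrank F ↥(W i ⊓ W j) - 1) := by
  have hsq (x : V) : #{i ∈ Q | x ∈ W i} ^ 2 = #{p ∈ Q ×ˢ Q | x ∈ W p.1 ⊓ W p.2} := by
    rw [sq, ← card_product, ← filter_product]
    exact congrArg card (filter_congr fun p _ => Submodule.mem_inf.symm)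
  simp only [hsq]
  rw [sum_card_filter_mem_ne_zero (Q ×ˢ Q) fun p => W p.1 ⊓ W p.2, sum_product]

end LinearAlgebra

section Partition

variable {F : Type} [Field F] {v : ℕ}

namespace IsVSPartition

variable {P : Set (Submodule F (Fin v → F))}

theorem existsUnique_mem_mem (hP : IsVSPartition 2 P) {x y : Fin v → F} (hx : x ≠ 0)
    (hy : y ∉ F ∙ x) : ∃! U, U ∈ P ∧ x ∈ U ∧ y ∈ U := by
  have hspan : ∀ U : Submodule F (Fin v → F),
      Submodule.span F {x, y} ≤ U ↔ x ∈ U ∧ y ∈ U :=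
    fun U => by simp [Submodule.span_le, Set.insert_subset_iff]
  simpa only [hspan] using hP.2 _ (finrank_span_pair hx hy)

theorem finrank_inf_le_one (hP : IsVSPartition 2 P) {U U' : Submodule F (Fin v → F)}
    (hU : U ∈ P) (hU' : U' ∈ P) (hne : U ≠ U') : finrank F ↥(U ⊓ U') ≤ 1 := by
  by_contra! h
  obtain ⟨x, hxUU', hx⟩ := Submodule.exists_mem_ne_zero_of_ne_bot fun h0 => by
    rw [← Submodule.finrank_eq_zero (S := U ⊓ U')] at h0; omega
  have hlt : (F ∙ x) < U ⊓ U' :=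
    lt_of_le_of_ne ((Submodule.span_singleton_le_iff_mem _ _).2 hxUU')
    fun heq => by rw [← heq, finrank_span_singleton hx] at h; omega
  obtain ⟨y, hy, hyx⟩ := SetLike.exists_of_lt hlt
  exact hne ((hP.existsUnique_mem_mem hx hyx).unique
    ⟨hU, hxUU'.1, hy.1⟩ ⟨hU', hxUU'.2, hy.2⟩)

theorem finrank_inf_eq_one_s11 (hP : IsVSPartition 2 P) {U U' : Submodule F (Fin v → F)}
    (hU : U ∈ P) (hU' : U' ∈ P) (hne : U ≠ U') (hdim : v < finrank F U + finrank F U') :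
    finrank F ↥(U ⊓ U') = 1 := by
  have := Submodule.finrank_sup_add_finrank_inf_eq U U'
  have := (U ⊔ U').finrank_le
  have := hP.finrank_inf_le_one hU hU' hne
  simp only [finrank_fin_fun] at *
  omega

end IsVSPartition

end Partition

section Counting

variable {F : Type} [Field F] [Fintype F] {v : ℕ} {P : Finset (Submodule F (Fin v → F))}

namespace IsVSPartition

theorem card_filter_eq_sum_card_filter_mem
    (hP : IsVSPartition 2 (P : Set (Submodule F (Fin v → F)))) {x : Fin v → F} (hx : x ≠ 0)
    (p : (Fin v → F) → Prop) [DecidablePred p] (hp : ∀ y, p y → y ∉ F ∙ x) :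
    #{y | p y} = ∑ U ∈ P with x ∈ U, #{y | y ∈ U ∧ p y} := by
  have hone : ∀ y ∈ ({y | p y} : Finset _),
      #(bipartiteAbove (fun y U => y ∈ U) {U ∈ P | x ∈ U} y) = 1 := fun y hy => by
    rw [card_eq_one_iff_existsUnique]
    simpa [bipartiteAbove, and_assoc] using hP.existsUnique_mem_mem hx (hp y (by simpa using hy))
  rw [card_eq_sum_ones, ← sum_congr rfl hone, sum_card_bipartiteAbove_eq_sum_card_bipartiteBelow]
  refine sum_congr rfl fun U _ => ?_
  rw [bipartiteBelow, filter_filter]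
  exact congrArg card (filter_congr fun y _ => and_comm)

theorem sum_filter_mem_pow_finrank_sub
    (hP : IsVSPartition 2 (P : Set (Submodule F (Fin v → F)))) {x : Fin v → F} (hx : x ≠ 0) :
    ∑ U ∈ P with x ∈ U, (Fintype.card F ^ finrank F U - Fintype.card F) =
      Fintype.card F ^ v - Fintype.card F := by
  have hline (W : Submodule F (Fin v → F)) (hW : (F ∙ x) ≤ W) :
      #{y | y ∈ W ∧ y ∉ F ∙ x} = Fintype.card F ^ finrank F W - Fintype.card F := by
    rw [card_filter_mem_notMem_of_le hW, finrank_span_singleton hx, pow_one]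
  calc ∑ U ∈ P with x ∈ U, (Fintype.card F ^ finrank F U - Fintype.card F)
      = ∑ U ∈ P with x ∈ U, #{y | y ∈ U ∧ y ∉ F ∙ x} := sum_congr rfl fun U hU =>
        (hline U ((Submodule.span_singleton_le_iff_mem _ _).2 (mem_filter.1 hU).2)).symm
    _ = #{y | y ∈ (⊤ : Submodule F (Fin v → F)) ∧ y ∉ F ∙ x} := by
        rw [← hP.card_filter_eq_sum_card_filter_mem hx (· ∉ F ∙ x) fun _ => id]
        simp only [Submodule.mem_top, true_and]
    _ = Fintype.card F ^ v - Fintype.card F := by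
        rw [hline ⊤ le_top, finrank_top, finrank_fin_fun]

theorem sum_sq_card_filter_mem [DecidableEq (Fin v → F)]
    (hP : IsVSPartition 2 (P : Set (Submodule F (Fin v → F))))
    {Q : Finset (Submodule F (Fin v → F))} (hQP : Q ⊆ P) {d : ℕ}
    (hQ : ∀ U ∈ Q, finrank F U = d) (hd : v < d + d) :
    ∑ x ∈ {x : Fin v → F | x ≠ 0}, #{U ∈ Q | x ∈ U} ^ 2 =
      #Q * (Fintype.card F ^ d - 1 + (#Q - 1) * (Fintype.card F - 1)) := by
  refine (sum_sq_card_filter_mem_ne_zero Q id).trans (sum_const_nat fun U hU => ?_)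
  rw [← add_sum_erase Q _ hU]
  dsimp only [id]
  rw [(LinearEquiv.ofEq _ _ (inf_idem U)).finrank_eq, hQ U hU, ← card_erase_of_mem hU]
  refine congrArg _ (sum_const_nat fun U' hU' => ?_)
  obtain ⟨hne, hU'⟩ := mem_erase.1 hU'
  rw [hP.finrank_inf_eq_one_s11 (hQP hU) (hQP hU') hne.symm (by rw [hQ U hU, hQ U' hU']; exact hd),
    pow_one]

end IsVSPartition

end Counting

section Binary

variable {v : ℕ} {P : Finset (Submodule (ZMod 2) (Fin v → ZMod 2))}

theorem two_pow_sub_two_pow_pred_mod_four {d : ℕ} (hd : 3 ≤ d) :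
    (2 ^ d - 2 ^ (d - 1)) % 4 = 0 := by
  obtain ⟨k, rfl⟩ : ∃ k, d = k + 3 := ⟨d - 3, by omega⟩
  rw [show k + 3 - 1 = k + 2 by omega]
  simp only [pow_succ]
  omega

namespace IsVSPartition

theorem even_card_filter_ofFinrank_two_not_le
    (hP : IsVSPartition 2 (P : Set (Submodule (ZMod 2) (Fin v → ZMod 2)))) (hv : 3 ≤ v)
    {x : Fin v → ZMod 2} (hx : x ≠ 0) {H : Submodule (ZMod 2) (Fin v → ZMod 2)}
    (hH : finrank (ZMod 2) H + 1 = v) (hxH : x ∈ H) :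
    Even #{U ∈ {U ∈ P.ofFinrank 2 | x ∈ U} | ¬ U ≤ H} := by
  replace hH : finrank (ZMod 2) H + 1 = finrank (ZMod 2) (Fin v → ZMod 2) := by
    rwa [finrank_fin_fun]
  have hterm : ∀ U ∈ P.filter (x ∈ ·), #{y | y ∈ U ∧ y ∉ H} % 4 =
      if finrank (ZMod 2) U = 2 ∧ ¬ U ≤ H then 2 else 0 := by
    intro U hU
    by_cases hUH : U ≤ H
    · simp only [hUH, not_true_eq_false, and_false, if_false]
      rw [filter_false_of_mem fun y _ hy => hy.2 (hUH hy.1), card_empty]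
    · rw [card_filter_mem_notMem_of_not_le hH hUH, ZMod.card]
      rcases (hP.1 U (mem_filter.1 hU).1).eq_or_lt with h2 | h3
      · simp [← h2, hUH]
      · simp [two_pow_sub_two_pow_pred_mod_four h3, h3.ne', hUH]
  have hout : ¬ (⊤ : Submodule (ZMod 2) (Fin v → ZMod 2)) ≤ H := fun h => by
    have := Submodule.finrank_mono h
    rw [finrank_top] at this
    omega
  have hstar := hP.card_filter_eq_sum_card_filter_mem hx (· ∉ H) fun y hy hyx =>
    hy ((Submodule.span_singleton_le_iff_mem _ _).2 hxH hyx)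
  have hcard := card_filter_mem_notMem_of_not_le hH hout
  simp only [Submodule.mem_top, true_and, finrank_top, ZMod.card, finrank_fin_fun] at hcard hstar
  have hmod := congrArg (· % 4) (hcard.symm.trans hstar)
  simp only [two_pow_sub_two_pow_pred_mod_four hv] at hmod
  rw [sum_nat_mod, sum_congr rfl hterm, sum_ite, sum_const, sum_const_zero, smul_eq_mul,
    filter_filter] at hmod
  rw [ofFinrank, filter_filter, filter_filter, Nat.even_iff]
  rw [filter_congr fun (U : Submodule (ZMod 2) (Fin v → ZMod 2)) _ =>
    (by tauto : finrank (ZMod 2) U = 2 ∧ x ∈ U ∧ ¬U ≤ H ↔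
      x ∈ U ∧ finrank (ZMod 2) U = 2 ∧ ¬U ≤ H)]
  omega

theorem card_filter_ofFinrank_two_ne_one
    (hP : IsVSPartition 2 (P : Set (Submodule (ZMod 2) (Fin v → ZMod 2)))) (hv : 3 ≤ v)
    {x : Fin v → ZMod 2} (hx : x ≠ 0) : #{U ∈ P.ofFinrank 2 | x ∈ U} ≠ 1 := by
  intro h
  obtain ⟨W, hW⟩ := card_eq_one.1 h
  have hWP : W ∈ {U ∈ P.ofFinrank 2 | x ∈ U} := by simp [hW]
  rw [mem_filter, mem_ofFinrank, and_assoc] at hWP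
  have hWx : ¬ W ≤ (ZMod 2) ∙ x := fun hle => by
    have := Submodule.finrank_mono hle
    rw [finrank_span_singleton hx, hWP.2.1] at this
    omega
  obtain ⟨z, hzW, hzx⟩ := SetLike.not_le_iff_exists.1 hWx
  obtain ⟨H, hH, hxH, hzH⟩ := exists_hyperplane_le_notMem hzx
  have := hP.even_card_filter_ofFinrank_two_not_le hv hx (by rwa [finrank_fin_fun] at hH)
    (hxH (Submodule.mem_span_singleton_self x))
  rw [hW, filter_singleton, if_pos fun hle => hzH (hle hzW), card_singleton] at this
  exact Nat.not_even_one this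

theorem card_filter_ofFinrank_two_ne_two
    (hP : IsVSPartition 2 (P : Set (Submodule (ZMod 2) (Fin v → ZMod 2)))) (hv : 3 ≤ v)
    {x : Fin v → ZMod 2} (hx : x ≠ 0) : #{U ∈ P.ofFinrank 2 | x ∈ U} ≠ 2 := by
  intro h
  obtain ⟨W₁, W₂, hne, hW⟩ := card_eq_two.1 h
  have hW₁ : W₁ ∈ {U ∈ P.ofFinrank 2 | x ∈ U} := by simp [hW]
  have hW₂ : W₂ ∈ {U ∈ P.ofFinrank 2 | x ∈ U} := by simp [hW]
  rw [mem_filter, mem_ofFinrank, and_assoc] at hW₁ hW₂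
  have hW₂₁ : ¬ W₂ ≤ W₁ := fun hle =>
    hne (Submodule.eq_of_le_of_finrank_eq hle (hW₂.2.1.trans hW₁.2.1.symm)).symm
  obtain ⟨z, hzW₂, hzW₁⟩ := SetLike.not_le_iff_exists.1 hW₂₁
  obtain ⟨H, hH, hW₁H, hzH⟩ := exists_hyperplane_le_notMem hzW₁
  have := hP.even_card_filter_ofFinrank_two_not_le hv hx (by rwa [finrank_fin_fun] at hH)
    (hW₁H hW₁.2.2)
  rw [hW, filter_insert, if_neg (not_not.2 hW₁H), filter_singleton,
    if_pos fun hle => hzH (hle hzW₂), card_singleton] at this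
  exact Nat.not_even_one this

end IsVSPartition

end Binary

namespace IsVSPartition

theorem card_three_add_five_mul_card_four_le
    {P : Finset (Submodule (ZMod 2) (Fin 7 → ZMod 2))}
    (hP : IsVSPartition 2 (P : Set (Submodule (ZMod 2) (Fin 7 → ZMod 2))))
    (htype : ∀ U ∈ P,
      finrank (ZMod 2) U = 4 ∨ finrank (ZMod 2) U = 3 ∨ finrank (ZMod 2) U = 2)
    {x : Fin 7 → ZMod 2} (hx : x ≠ 0) :
    #{U ∈ P.ofFinrank 3 | x ∈ U} + 5 * #{U ∈ P.ofFinrank 4 | x ∈ U} ≤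
      21 + #{U ∈ P.ofFinrank 4 | x ∈ U} ^ 2 := by
  have hpoint := hP.sum_filter_mem_pow_finrank_sub hx
  rw [ZMod.card, sum_comp_finrank (fun d => 2 ^ d - 2) (D := {4, 3, 2})
    fun U hU => by simpa using htype U (mem_filter.1 hU).1] at hpoint
  rw [sum_insert (by decide), sum_insert (by decide), sum_singleton] at hpoint
  simp only [smul_eq_mul, ofFinrank_filter] at hpoint
  have h1 := hP.card_filter_ofFinrank_two_ne_one (by norm_num) hx
  have h2 := hP.card_filter_ofFinrank_two_ne_two (by norm_num) hx
  -- `hpoint` reads `14a + 6b + 2c = 126`; the bound fails only for `(a, c) = (1, 2), (2, 1)`.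
  have ha : #{U ∈ P.ofFinrank 4 | x ∈ U} ≤ 9 := by omega
  interval_cases #{U ∈ P.ofFinrank 4 | x ∈ U} <;> omega

end IsVSPartition

/-- If `P` is a vector space `2`-partition of `F_2^7` of type `4^(m_4) 3^(m_3) 2^⋆`,
then `m_3 ≤ 381 − ⌈m_4(61 − m_4)/7⌉`. -/
theorem upper_bound_m4_m3 (P : Set (Submodule (ZMod 2) (Fin 7 → ZMod 2)))
    (hP : IsVSPartition 2 P)
    (htype : ∀ U ∈ P, finrank (ZMod 2) U = 4 ∨ finrank (ZMod 2) U = 3 ∨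
      finrank (ZMod 2) U = 2)
    (m4 m3 : ℕ)
    (hm4 : {U ∈ P | finrank (ZMod 2) U = 4}.ncard = m4)
    (hm3 : {U ∈ P | finrank (ZMod 2) U = 3}.ncard = m3) :
    (m3 : ℤ) ≤ 381 - ⌈((m4 : ℚ) * (61 - (m4 : ℚ))) / 7⌉ := by
  obtain ⟨P, rfl⟩ := (Set.toFinite P).exists_finset_coe
  rw [← card_ofFinrank] at hm4 hm3
  have hpts : #{x : Fin 7 → ZMod 2 | x ≠ 0} = 127 := by
    rw [filter_ne', card_erase_of_mem (mem_univ _), card_univ]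
    simp
  have hsum := sum_le_sum (s := {x : Fin 7 → ZMod 2 | x ≠ 0}) fun x hx =>
    hP.card_three_add_five_mul_card_four_le htype (mem_filter.1 hx).2
  rw [sum_add_distrib, ← mul_sum, sum_add_distrib, sum_const, hpts,
    sum_card_filter_mem_of_finrank_eq fun U hU => (mem_ofFinrank.1 hU).2,
    sum_card_filter_mem_of_finrank_eq fun U hU => (mem_ofFinrank.1 hU).2,
    hP.sum_sq_card_filter_mem (Q := P.ofFinrank 4) (filter_subset _ _)
      (fun U hU => (mem_ofFinrank.1 hU).2) (by norm_num), hm4, hm3, ZMod.card, smul_eq_mul] at hsum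
  have hsq : m4 * (2 ^ 4 - 1 + (m4 - 1) * (2 - 1)) = m4 * (m4 + 14) := by
    cases m4 with
    | zero => simp
    | succ m => rw [Nat.add_sub_cancel]; ring
  have hq : (m3 : ℚ) * 7 + 5 * (m4 * 15) ≤ 127 * 21 + m4 * (m4 + 14) := by
    exact_mod_cast hsq ▸ hsum
  refine le_sub_comm.1 (Int.ceil_le.2 ?_)
  rw [div_le_iff₀ (by norm_num)]
  push_cast
  linarith
end

section
/- Let q be a prime power, t ≥ 1, r ≥ 1, and let 𝒩 be a non-empty q^r-divisible set of t-dimensional subspaces of 𝔽_q^v with n = #𝒩. Then there exists a hyperplane H of 𝔽_q^v with #{N ∈ 𝒩 : N ≤ H} < n/q^t. -/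
open Module

/-- A set `N` of subspaces of `F^v` is `m`-divisible if
`#N ≡ #{X ∈ N : X ≤ H} (mod m)` for every hyperplane `H` of `F^v`. -/
def IsModDivisible {F : Type} [Field F] {v : ℕ} (m : ℕ)
    (N : Set (Submodule F (Fin v → F))) : Prop :=
  ∀ H : Submodule F (Fin v → F), finrank F H = v - 1 →
    N.ncard ≡ {X ∈ N | X ≤ H}.ncard [MOD m]

/-! Averaging over linear functionals: a `t`-subspace lies in the kernel of exactly `q ^ (v - t)`
functionals, the zero functional among them, so the `q ^ v - 1` nonzero functionals `φ` have on
average `n (q ^ (v - t) - 1) / (q ^ v - 1) < n / q ^ t` members of `N` inside the hyperplane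
`ker φ`. Some `φ` is below the average. -/

open Finset

theorem mul_pow_sub_sub_lt_pow_sub_one_mul_div {K : Type*} [Field K] [LinearOrder K]
    [IsStrictOrderedRing K] {q n : K} (hq : 1 < q) (hn : 0 < n) {t d : ℕ} (ht : 1 ≤ t)
    (htd : t ≤ d) : n * q ^ (d - t) - n < (q ^ d - 1) * (n / q ^ t) := by
  have hqt : 1 < q ^ t := one_lt_pow₀ hq (by omega)
  have hqd : q ^ d = q ^ t * q ^ (d - t) := by rw [← pow_add, Nat.add_sub_cancel' htd]
  rw [hqd, mul_div_assoc', lt_div_iff₀ (by linarith)]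
  nlinarith

section Counting

open scoped Classical

variable {F V : Type*} [Field F] [Fintype F] [AddCommGroup V] [Module F V]
  [FiniteDimensional F V] [Fintype (Dual F V)]

theorem Submodule.card_filter_le_ker (W : Submodule F V) :
    #{φ : Dual F V | W ≤ LinearMap.ker φ} = Fintype.card F ^ (finrank F V - finrank F W) := by
  have hker (φ : Dual F V) : W ≤ LinearMap.ker φ ↔ φ ∈ W.dualAnnihilator := by
    simp [Submodule.mem_dualAnnihilator, SetLike.le_def]
  have hrank : finrank F W.dualAnnihilator = finrank F V - finrank F W := by
    have := Subspace.finrank_add_finrank_dualAnnihilator_eq W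
    omega
  rw [← hrank, ← Fintype.card_subtype, Fintype.card_congr (Equiv.subtypeEquivRight hker)]
  exact Module.card_eq_pow_finrank (K := F) (V := W.dualAnnihilator)

theorem sum_card_filter_le_ker {t : ℕ} (N : Finset (Submodule F V))
    (hN : ∀ X ∈ N, finrank F X = t) :
    ∑ φ : Dual F V, #{X ∈ N | X ≤ LinearMap.ker φ}
      = #N * Fintype.card F ^ (finrank F V - t) := by
  calc ∑ φ : Dual F V, #{X ∈ N | X ≤ LinearMap.ker φ}
      = ∑ X ∈ N, #{φ : Dual F V | X ≤ LinearMap.ker φ} :=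
        (sum_card_bipartiteAbove_eq_sum_card_bipartiteBelow _).symm
    _ = #N * Fintype.card F ^ (finrank F V - t) :=
        sum_const_nat fun X hX ↦ by rw [Submodule.card_filter_le_ker, hN X hX]

theorem sum_erase_zero_card_filter_le_ker_add {t : ℕ} (N : Finset (Submodule F V))
    (hN : ∀ X ∈ N, finrank F X = t) :
    ∑ φ ∈ univ.erase (0 : Dual F V), #{X ∈ N | X ≤ LinearMap.ker φ} + #N
      = #N * Fintype.card F ^ (finrank F V - t) := by
  rw [← sum_card_filter_le_ker N hN, ← sum_erase_add _ _ (mem_univ 0), LinearMap.ker_zero,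
    filter_true_of_mem fun X _ ↦ le_top]

theorem exists_ne_zero_card_filter_le_ker_lt {t : ℕ} (ht : 1 ≤ t) (N : Finset (Submodule F V))
    (hN : ∀ X ∈ N, finrank F X = t) (hne : N.Nonempty) :
    ∃ φ : Dual F V, φ ≠ 0 ∧
      (#{X ∈ N | X ≤ LinearMap.ker φ} : ℚ) < #N / (Fintype.card F : ℚ) ^ t := by
  obtain ⟨X, hX⟩ := hne
  have htd : t ≤ finrank F V := hN X hX ▸ Submodule.finrank_le X
  have hsum : ∑ φ ∈ univ.erase (0 : Dual F V), (#{X ∈ N | X ≤ LinearMap.ker φ} : ℚ)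
      = #N * (Fintype.card F : ℚ) ^ (finrank F V - t) - #N := by
    rw [eq_sub_iff_add_eq]
    exact_mod_cast sum_erase_zero_card_filter_le_ker_add N hN
  have hcard : (#(univ.erase (0 : Dual F V)) : ℚ) = (Fintype.card F : ℚ) ^ finrank F V - 1 := by
    rw [card_erase_of_mem (mem_univ 0), card_univ, Nat.cast_sub Fintype.card_pos,
      Module.card_eq_pow_finrank (K := F), Subspace.dual_finrank_eq, Nat.cast_pow, Nat.cast_one]
  obtain ⟨φ, hφ, hlt⟩ := exists_lt_of_sum_lt (s := univ.erase (0 : Dual F V))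
    (g := fun _ ↦ (#N : ℚ) / (Fintype.card F : ℚ) ^ t) <| by
      rw [hsum, sum_const, nsmul_eq_mul, hcard]
      exact mul_pow_sub_sub_lt_pow_sub_one_mul_div (by exact_mod_cast Fintype.one_lt_card)
        (by exact_mod_cast card_pos.mpr ⟨X, hX⟩) ht htd
  exact ⟨φ, ne_of_mem_erase hφ, hlt⟩

end Counting

theorem exists_light_hyperplane_general (q v t : ℕ) (ht : 1 ≤ t)
    (F : Type) [Field F] [Fintype F] (hq : Fintype.card F = q)
    (N : Set (Submodule F (Fin v → F)))
    (hNt : ∀ X ∈ N, finrank F X = t)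
    (hne : N.Nonempty) :
    ∃ H : Submodule F (Fin v → F), finrank F H = v - 1 ∧
      ({X ∈ N | X ≤ H}.ncard : ℚ) < (N.ncard : ℚ) / (q : ℚ) ^ t := by
  subst hq
  have : Finite (Dual F (Fin v → F)) := Module.finite_of_finite F
  have : Fintype (Dual F (Fin v → F)) := Fintype.ofFinite _
  obtain ⟨N, rfl⟩ := N.toFinite.exists_finset_coe
  obtain ⟨φ, hφ, hlt⟩ := exists_ne_zero_card_filter_le_ker_lt ht N hNt (by simpa using hne)
  refine ⟨LinearMap.ker φ, ?_, ?_⟩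
  · have := φ.finrank_ker_add_one_of_ne_zero hφ
    rw [finrank_fin_fun] at this
    omega
  · rw [← Set.ncard_coe_finset, coe_filter, ← Set.ncard_coe_finset] at hlt
    exact hlt

/-- For a non-empty `q^r`-divisible set `N` of `t`-subspaces of `F_q^v` there exists a
hyperplane `H` with `#{X ∈ N : X ≤ H} < #N / q^t`. -/
theorem exists_light_hyperplane (q v t r : ℕ) (ht : 1 ≤ t) (hr : 1 ≤ r)
    (F : Type) [Field F] [Fintype F] (hq : Fintype.card F = q)
    (N : Set (Submodule F (Fin v → F)))
    (hNt : ∀ X ∈ N, finrank F X = t)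
    (hdiv : IsModDivisible (q ^ r) N)
    (hne : N.Nonempty) :
    ∃ H : Submodule F (Fin v → F), finrank F H = v - 1 ∧
      ({X ∈ N | X ≤ H}.ncard : ℚ) < (N.ncard : ℚ) / (q : ℚ) ^ t :=
  exists_light_hyperplane_general q v t ht F hq N hNt hne
end

section
/- Let q be a prime power, t ≥ 2 and r ≥ 1 integers, and let 𝒩 be a non-empty q^r-divisible set of t-dimensional subspaces of 𝔽_q^v that is not contained in any hyperplane of 𝔽_q^v. If q^r divides #𝒩, then #𝒩 ≥ q^{r+1}. -/
open Module

/-!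
Fix `X₀ ∈ 𝒩`, of codimension `e ≥ 1`. Every hyperplane through `X₀` contains a positive
multiple of `q^r` members of `𝒩`, so at least `q^r - 1` besides `X₀`; any other member `Y`
spans with `X₀` a space of dimension `> t`, so it lies on at most `(q^(e-1) - 1)/(q - 1)` of
the `(q^e - 1)/(q - 1)` hyperplanes through `X₀`. Double counting gives
`(q^e - 1)(q^r - 1) ≤ (#𝒩 - 1)(q^(e-1) - 1)`, hence `#𝒩 > q^r (q - 1)`, and `q^r ∣ #𝒩`
forces `#𝒩 ≥ q^(r+1)`.
-/

open Finset

section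

variable {K V : Type*} [DivisionRing K] [AddCommGroup V] [Module K V] [FiniteDimensional K V]

theorem Submodule.finrank_lt_finrank_sup_of_ne {U W : Submodule K V}
    (h : finrank K U = finrank K W) (hne : U ≠ W) : finrank K U < finrank K ↥(U ⊔ W) := by
  refine Submodule.finrank_lt_finrank_of_lt (lt_of_le_of_ne le_sup_left fun heq => hne ?_)
  exact (Submodule.eq_of_le_of_finrank_eq (heq ▸ le_sup_right) h.symm).symm

theorem Submodule.lt_finrank_of_dvd_ncard {N : Set (Submodule K V)} {t m : ℕ}
    (hN : ∀ X ∈ N, finrank K X = t) (hne : N.Nonempty) (hm : 1 < m) (hdvd : m ∣ N.ncard) :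
    t < finrank K V := by
  obtain ⟨X₀, hX₀⟩ := hne
  refine lt_of_le_of_ne (hN X₀ hX₀ ▸ Submodule.finrank_le X₀) fun htop => ?_
  have hsub : N ⊆ {⊤} := fun X hX => Submodule.eq_top_of_finrank_eq ((hN X hX).trans htop)
  have hle := (Set.ncard_le_ncard hsub).trans (Set.ncard_singleton _).le
  have hpos := (Set.ncard_pos ((Set.finite_singleton _).subset hsub)).2 ⟨X₀, hX₀⟩
  have := Nat.le_of_dvd hpos hdvd
  omega

end

section

variable {F V : Type*} [Field F] [Fintype F] [AddCommGroup V] [Module F V] [FiniteDimensional F V]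

theorem Submodule.natCard_dualAnnihilator (U : Submodule F V) :
    Nat.card U.dualAnnihilator = Fintype.card F ^ (finrank F V - finrank F U) := by
  rw [Module.natCard_eq_pow_finrank (K := F), Nat.card_eq_fintype_card,
    ← Subspace.finrank_add_finrank_dualAnnihilator_eq U, Nat.add_sub_cancel_left]

noncomputable instance : Fintype (Dual F V) :=
  haveI := Module.finite_of_finite F (M := Dual F V)
  Fintype.ofFinite _

open Classical in
/-- Hyperplanes are handled as kernels of nonzero functionals; each hyperplane through `U` is
the kernel of exactly `q - 1` members of this set. -/
noncomputable def hyperplaneFunctionals (U : Submodule F V) : Finset (Dual F V) :=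
  {φ | φ ≠ 0 ∧ U ≤ LinearMap.ker φ}

theorem mem_hyperplaneFunctionals {U : Submodule F V} {φ : Dual F V} :
    φ ∈ hyperplaneFunctionals U ↔ φ ≠ 0 ∧ U ≤ LinearMap.ker φ := by
  simp [hyperplaneFunctionals]

theorem card_hyperplaneFunctionals (U : Submodule F V) :
    #(hyperplaneFunctionals U) = Fintype.card F ^ (finrank F V - finrank F U) - 1 := by
  classical
  have hann : hyperplaneFunctionals U = ({φ | φ ∈ U.dualAnnihilator} : Finset _).erase 0 := by
    ext φ
    simp [mem_hyperplaneFunctionals, Submodule.mem_dualAnnihilator, SetLike.le_def]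
  rw [hann, card_erase_of_mem (by simp), ← Submodule.natCard_dualAnnihilator,
    Nat.card_eq_fintype_card, Fintype.card_subtype]

theorem card_hyperplaneFunctionals_sup_le {X Y : Submodule F V} (h : finrank F X = finrank F Y)
    (hne : X ≠ Y) :
    #(hyperplaneFunctionals (X ⊔ Y)) ≤ Fintype.card F ^ (finrank F V - finrank F X - 1) - 1 := by
  rw [card_hyperplaneFunctionals]
  have hlt := Submodule.finrank_lt_finrank_sup_of_ne h hne
  have hle := Submodule.finrank_le (X ⊔ Y)
  exact Nat.sub_le_sub_right (Nat.pow_le_pow_right Fintype.card_pos (by omega)) 1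

open scoped Classical in
theorem hyperplaneFunctionals_sup (X Y : Submodule F V) :
    hyperplaneFunctionals (X ⊔ Y) = {φ ∈ hyperplaneFunctionals X | Y ≤ LinearMap.ker φ} := by
  ext φ
  rw [mem_filter, mem_hyperplaneFunctionals, mem_hyperplaneFunctionals, sup_le_iff, and_assoc]

open scoped Classical in
theorem pow_sub_one_mul_le_of_le_card_filter_le_ker
    {N : Finset (Submodule F V)} {X₀ : Submodule F V} (hX₀ : X₀ ∈ N)
    (hN : ∀ X ∈ N, finrank F X = finrank F X₀) {m : ℕ}
    (hm : ∀ φ ∈ hyperplaneFunctionals X₀, m ≤ #{Y ∈ N | Y ≤ LinearMap.ker φ}) :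
    (Fintype.card F ^ (finrank F V - finrank F X₀) - 1) * (m - 1)
      ≤ (#N - 1) * (Fintype.card F ^ (finrank F V - finrank F X₀ - 1) - 1) := by
  rw [← card_hyperplaneFunctionals, ← card_erase_of_mem hX₀]
  refine card_mul_le_card_mul (fun φ Y => Y ≤ LinearMap.ker φ) (fun φ hφ => ?_) fun Y hY => ?_
  · have hX₀φ : X₀ ∈ {Y ∈ N | Y ≤ LinearMap.ker φ} :=
      mem_filter.2 ⟨hX₀, (mem_hyperplaneFunctionals.1 hφ).2⟩
    rw [bipartiteAbove, filter_erase, card_erase_of_mem hX₀φ]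
    exact Nat.sub_le_sub_right (hm φ hφ) 1
  · obtain ⟨hne, hY⟩ := mem_erase.1 hY
    rw [bipartiteBelow, ← hyperplaneFunctionals_sup]
    exact card_hyperplaneFunctionals_sup_le (hN Y hY).symm hne.symm

end

theorem Module.Dual.finrank_ker_fin_fun {F : Type*} [Field F] {v : ℕ} {φ : Dual F (Fin v → F)}
    (hφ : φ ≠ 0) : finrank F (LinearMap.ker φ) = v - 1 := by
  have := φ.finrank_ker_add_one_of_ne_zero hφ
  rw [finrank_fin_fun] at this
  omega

theorem IsModDivisible.le_ncard_setOf_le {F : Type} [Field F] [Fintype F] {v m : ℕ}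
    {N : Set (Submodule F (Fin v → F))} (hdiv : IsModDivisible m N) (hdvd : m ∣ N.ncard)
    {H : Submodule F (Fin v → F)} (hH : finrank F H = v - 1) {X : Submodule F (Fin v → F)}
    (hX : X ∈ N) (hXH : X ≤ H) : m ≤ {Y ∈ N | Y ≤ H}.ncard :=
  Nat.le_of_dvd ((Set.ncard_pos (Set.toFinite _)).2 ⟨X, hX, hXH⟩)
    (((hdiv H hH).dvd_iff dvd_rfl).1 hdvd)

theorem mul_sub_one_lt_of_pow_sub_one_mul_le {q P e n : ℕ} (hq : 2 ≤ q) (hqP : q ≤ P)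
    (he : 1 ≤ e) (h : (q ^ e - 1) * (P - 1) ≤ (n - 1) * (q ^ (e - 1) - 1)) :
    P * (q - 1) < n := by
  obtain ⟨k, rfl⟩ : ∃ k, e = k + 1 := ⟨e - 1, by omega⟩
  rw [Nat.add_sub_cancel, pow_succ'] at h
  have ha : 1 ≤ q ^ k := Nat.one_le_pow _ _ (by omega)
  by_contra! hn
  -- contradicts `q ^ (k+1) - 1 > q (q ^ k - 1)`
  have hn' : (n - 1) * (q ^ k - 1) ≤ (P * (q - 1) - 1) * (q ^ k - 1) :=
    Nat.mul_le_mul_right _ (by omega)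
  have hPq : 1 ≤ P * (q - 1) := Nat.mul_pos (by omega) (by omega)
  have hqa : 1 ≤ q * q ^ k := by nlinarith
  have := h.trans hn'
  zify [ha, hqa, hPq, (by omega : 1 ≤ P), (by omega : 1 ≤ q)] at this
  nlinarith

theorem mul_le_of_dvd_of_mul_sub_one_lt {P q n : ℕ} (h : P ∣ n) (hlt : P * (q - 1) < n) :
    P * q ≤ n := by
  obtain ⟨k, rfl⟩ := h
  have := lt_of_mul_lt_mul_left hlt
  exact Nat.mul_le_mul_left _ (by omega)

theorem min_card_divisible_case_general (q v t r : ℕ) (hr : 1 ≤ r)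
    (F : Type) [Field F] [Fintype F] (hq : Fintype.card F = q)
    (N : Set (Submodule F (Fin v → F)))
    (hNt : ∀ X ∈ N, finrank F X = t)
    (hdiv : IsModDivisible (q ^ r) N)
    (hne : N.Nonempty)
    (hdvd : q ^ r ∣ N.ncard) :
    q ^ (r + 1) ≤ N.ncard := by
  classical
  subst hq
  obtain ⟨X₀, hX₀⟩ := hne
  have hq : 2 ≤ Fintype.card F := Fintype.one_lt_card
  have hqP : Fintype.card F ≤ Fintype.card F ^ r := Nat.le_self_pow (by omega) _
  have hcodim := Submodule.lt_finrank_of_dvd_ncard hNt ⟨X₀, hX₀⟩ (by omega) hdvd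
  rw [finrank_fin_fun] at hcodim
  have hthrough (φ : Dual F (Fin v → F)) (hφ : φ ∈ hyperplaneFunctionals X₀) :
      Fintype.card F ^ r ≤ #{Y ∈ N.toFinite.toFinset | Y ≤ LinearMap.ker φ} := by
    obtain ⟨hφ0, hX₀φ⟩ := mem_hyperplaneFunctionals.1 hφ
    convert hdiv.le_ncard_setOf_le hdvd (Module.Dual.finrank_ker_fin_fun hφ0) hX₀ hX₀φ using 1
    simp only [← Set.ncard_coe_finset, coe_filter, Set.Finite.mem_toFinset]
  have hcount := pow_sub_one_mul_le_of_le_card_filter_le_ker ((Set.Finite.mem_toFinset _).2 hX₀)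
    (fun X hX => by rw [hNt X ((Set.Finite.mem_toFinset _).1 hX), hNt X₀ hX₀]) hthrough
  rw [finrank_fin_fun, hNt X₀ hX₀, ← Set.ncard_eq_toFinset_card N] at hcount
  rw [pow_succ]
  exact mul_le_of_dvd_of_mul_sub_one_lt hdvd
    (mul_sub_one_lt_of_pow_sub_one_mul_le hq hqP (by omega) hcount)

/-- Theorem (minimum cardinality, part (i)): a non-empty `q^r`-divisible set `N` of
`t`-subspaces (`t ≥ 2`, `r ≥ 1`) not contained in any hyperplane, whose cardinality is
divisible by `q^r`, satisfies `#N ≥ q^(r+1)`. -/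
theorem min_card_divisible_case (q v t r : ℕ) (ht : 2 ≤ t) (hr : 1 ≤ r)
    (F : Type) [Field F] [Fintype F] (hq : Fintype.card F = q)
    (N : Set (Submodule F (Fin v → F)))
    (hNt : ∀ X ∈ N, finrank F X = t)
    (hdiv : IsModDivisible (q ^ r) N)
    (hne : N.Nonempty)
    (hspan : ¬ ∃ H : Submodule F (Fin v → F), finrank F H = v - 1 ∧ ∀ X ∈ N, X ≤ H)
    (hdvd : q ^ r ∣ N.ncard) :
    q ^ (r + 1) ≤ N.ncard :=
  min_card_divisible_case_general q v t r hr F hq N hNt hdiv hne hdvd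
end
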